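/- arXiv:2012.02289 — 5 statements merged into one kernel-verified Lean document; each statement's English description precedes it below -/
import Mathlib

section
/- For t = (t₁, t₂) ∈ ℂ², let X̃(t) = ( [[0, t₁],[0, 0]], [[0, t₂],[0, 0]] ) ∈ M₂(ℂ)². Then X̃(t) lies in the boundary (topological frontier) of 𝔓_E[2] if and only if |t₁| ≤ 1, |t₂| ≤ 1, and either |t₁| = 1 or |t₂| = 1. -/
open Matrix Kronecker
open scoped ComplexOrder

/-- The operator norm of a rectangular complex matrix, induced by the Euclidean norms. -/
noncomputable def opNorm {a b : ℕ} (A : Matrix (Fin a) (Fin b) ℂ) : ℝ :=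
  ‖LinearMap.toContinuousLinearMap (Matrix.toEuclideanLin A)‖

/-- The block matrix `E₁` on `ℂ^d = ℂ^k ⊕ ℂ^m ⊕ ℂ^n` whose `(1,2)` block is `C₁` and whose
other blocks vanish. -/
def E1mat (k m n : ℕ) (C1 : Matrix (Fin k) (Fin m) ℂ) :
    Matrix (Fin k ⊕ Fin m ⊕ Fin n) (Fin k ⊕ Fin m ⊕ Fin n) ℂ :=
  Matrix.of fun i j =>
    match i, j with
    | Sum.inl a, Sum.inr (Sum.inl b) => C1 a b
    | _, _ => 0

/-- The block matrix `E₂` on `ℂ^d = ℂ^k ⊕ ℂ^m ⊕ ℂ^n` whose `(2,3)` block is `C₂` and whose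
other blocks vanish. -/
def E2mat (k m n : ℕ) (C2 : Matrix (Fin m) (Fin n) ℂ) :
    Matrix (Fin k ⊕ Fin m ⊕ Fin n) (Fin k ⊕ Fin m ⊕ Fin n) ℂ :=
  Matrix.of fun i j =>
    match i, j with
    | Sum.inr (Sum.inl a), Sum.inr (Sum.inr b) => C2 a b
    | _, _ => 0

/-- The homogeneous pencil `Λ_E(X) = E₁ ⊗ X₁ + E₂ ⊗ X₂` (Kronecker product). -/
noncomputable def LamE {k m n N : ℕ} (C1 : Matrix (Fin k) (Fin m) ℂ)
    (C2 : Matrix (Fin m) (Fin n) ℂ) (X1 X2 : Matrix (Fin N) (Fin N) ℂ) :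
    Matrix ((Fin k ⊕ Fin m ⊕ Fin n) × Fin N) ((Fin k ⊕ Fin m ⊕ Fin n) × Fin N) ℂ :=
  E1mat k m n C1 ⊗ₖ X1 + E2mat k m n C2 ⊗ₖ X2

/-- `𝔓_E[N] = {X ∈ M_N(ℂ)² : L_E(X) = I − Λ_E(X) − Λ_E(X)* ≻ 0}`. -/
noncomputable def PE (k m n : ℕ) (C1 : Matrix (Fin k) (Fin m) ℂ)
    (C2 : Matrix (Fin m) (Fin n) ℂ) (N : ℕ) :
    Set (Matrix (Fin N) (Fin N) ℂ × Matrix (Fin N) (Fin N) ℂ) :=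
  {X | (1 - LamE C1 C2 X.1 X.2 - (LamE C1 C2 X.1 X.2)ᴴ).PosDef}

namespace TXTAux

open Matrix Kronecker Complex
open scoped ComplexOrder

noncomputable def nsq {a : Type*} [Fintype a] (w : a → ℂ) : ℝ := ∑ i, Complex.normSq (w i)

lemma nsq_nonneg {a : Type*} [Fintype a] (w : a → ℂ) : 0 ≤ nsq w :=
  Finset.sum_nonneg fun _ _ => Complex.normSq_nonneg _

lemma lam_quadform {k m n : ℕ} (C1 : Matrix (Fin k) (Fin m) ℂ) (C2 : Matrix (Fin m) (Fin n) ℂ)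
    (t1 t2 : ℂ) (v : (Fin k ⊕ Fin m ⊕ Fin n) × Fin 2 → ℂ) :
    star v ⬝ᵥ ((LamE C1 C2 !![0, t1; 0, 0] !![0, t2; 0, 0]) *ᵥ v)
      = t1 * (star (fun p => v (Sum.inl p, 0)) ⬝ᵥ (C1 *ᵥ fun q => v (Sum.inr (Sum.inl q), 1)))
      + t2 * (star (fun q => v (Sum.inr (Sum.inl q), 0)) ⬝ᵥ (C2 *ᵥ fun r => v (Sum.inr (Sum.inr r), 1))) := by
  simp only [LamE, dotProduct, Matrix.mulVec, Matrix.add_apply, Matrix.kroneckerMap_apply,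
    E1mat, E2mat, Matrix.of_apply, Fintype.sum_prod_type, Fintype.sum_sum_type, Fin.sum_univ_two,
    Pi.star_apply, Matrix.cons_val', Matrix.cons_val_zero, Matrix.cons_val_one, Matrix.head_cons,
    Matrix.empty_val', Matrix.cons_val_fin_one, Matrix.head_fin_const,
    mul_zero, zero_mul, add_zero, zero_add, Finset.sum_const_zero, Finset.mul_sum]
  ring_nf
  congr 1 <;> exact Finset.sum_congr rfl fun _ _ => Finset.sum_congr rfl fun _ _ => by ring



lemma star_dot_self {a : Type*} [Fintype a] (v : a → ℂ) :
    star v ⬝ᵥ v = (nsq v : ℂ) := by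
  simp [dotProduct, nsq, Pi.star_apply, Complex.normSq_eq_conj_mul_self]

lemma dot_conjTranspose {ι : Type*} [Fintype ι] (M : Matrix ι ι ℂ) (v : ι → ℂ) :
    star v ⬝ᵥ (Mᴴ *ᵥ v) = star (star v ⬝ᵥ (M *ᵥ v)) := by
  simp only [dotProduct, Matrix.mulVec, Matrix.conjTranspose_apply, Pi.star_apply,
    star_sum, star_mul', star_star, Finset.mul_sum, Finset.sum_mul]
  rw [Finset.sum_comm]
  exact Finset.sum_congr rfl fun _ _ => Finset.sum_congr rfl fun _ _ => by ring

lemma normSq_le_nsq {a : Type*} [Fintype a] (v : a → ℂ) (i : a) :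
    Complex.normSq (v i) ≤ nsq v :=
  Finset.single_le_sum (fun j _ => Complex.normSq_nonneg (v j)) (Finset.mem_univ i)

lemma abs_quadform_le {ι : Type*} [Fintype ι] (M : Matrix ι ι ℂ) (v : ι → ℂ) :
    ‖star v ⬝ᵥ (M *ᵥ v)‖ ≤ (∑ p, ∑ q, ‖M p q‖) * nsq v := by
  rw [dotProduct]
  refine le_trans (norm_sum_le _ _) ?_
  rw [Finset.sum_mul]
  refine Finset.sum_le_sum fun p _ => ?_
  rw [Matrix.mulVec, dotProduct, norm_mul]
  refine le_trans (mul_le_mul_of_nonneg_left (norm_sum_le _ _)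
    (norm_nonneg _)) ?_
  rw [Finset.mul_sum, Finset.sum_mul]
  refine Finset.sum_le_sum fun q _ => ?_
  rw [norm_mul]
  have h1 : ‖star v p‖ * (‖M p q‖ * ‖v q‖)
      = ‖M p q‖ * (‖v p‖ * ‖v q‖) := by
    simp [Pi.star_apply, map_star]; ring
  rw [h1]
  refine mul_le_mul_of_nonneg_left ?_ (norm_nonneg _)
  have h2 : ‖v p‖ * ‖v q‖
      ≤ (Complex.normSq (v p) + Complex.normSq (v q)) / 2 := by
    have := sq_nonneg (‖v p‖ - ‖v q‖)
    have e1 : Complex.normSq (v p) = (‖v p‖)^2 := (Complex.sq_norm _).symm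
    have e2 : Complex.normSq (v q) = (‖v q‖)^2 := (Complex.sq_norm _).symm
    nlinarith
  refine le_trans h2 ?_
  have := normSq_le_nsq v p
  have := normSq_le_nsq v q
  linarith


lemma norm_euclidean {a : ℕ} (w : Fin a → ℂ) :
    ‖((WithLp.equiv 2 (Fin a → ℂ)).symm w : EuclideanSpace ℂ (Fin a))‖ = Real.sqrt (nsq w) := by
  rw [EuclideanSpace.norm_eq, nsq]
  congr 1
  refine Finset.sum_congr rfl fun i _ => ?_
  simp [Complex.sq_norm]

lemma abs_dot_mulVec_le {a b : ℕ} (A : Matrix (Fin a) (Fin b) ℂ) (x : Fin a → ℂ) (y : Fin b → ℂ) :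
    ‖star x ⬝ᵥ (A *ᵥ y)‖ ≤ opNorm A * (Real.sqrt (nsq x) * Real.sqrt (nsq y)) := by
  set T := LinearMap.toContinuousLinearMap (Matrix.toEuclideanLin A)
  set X : EuclideanSpace ℂ (Fin a) := (WithLp.equiv 2 (Fin a → ℂ)).symm x
  set Y : EuclideanSpace ℂ (Fin b) := (WithLp.equiv 2 (Fin b → ℂ)).symm y
  have h1 : star x ⬝ᵥ (A *ᵥ y) = inner (𝕜 := ℂ) X (T Y) := by
    rw [EuclideanSpace.inner_eq_star_dotProduct, dotProduct_comm]
    rfl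
  rw [h1]
  have h2 : ‖inner (𝕜 := ℂ) X (T Y)‖ = ‖inner (𝕜 := ℂ) X (T Y)‖ :=
    rfl
  rw [h2]
  refine le_trans (norm_inner_le_norm _ _) ?_
  have h3 : ‖T Y‖ ≤ opNorm A * ‖Y‖ := T.le_opNorm Y
  have h4 : ‖X‖ = Real.sqrt (nsq x) := norm_euclidean x
  have h5 : ‖Y‖ = Real.sqrt (nsq y) := norm_euclidean y
  calc ‖X‖ * ‖T Y‖ ≤ ‖X‖ * (opNorm A * ‖Y‖) :=
        mul_le_mul_of_nonneg_left h3 (norm_nonneg _)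
    _ = opNorm A * (Real.sqrt (nsq x) * Real.sqrt (nsq y)) := by rw [h4, h5]; ring

lemma sqrt_mul_sqrt_le (x y : ℝ) (hx : 0 ≤ x) (hy : 0 ≤ y) :
    Real.sqrt x * Real.sqrt y ≤ (x + y) / 2 := by
  have h1 := Real.sq_sqrt hx
  have h2 := Real.sq_sqrt hy
  nlinarith [sq_nonneg (Real.sqrt x - Real.sqrt y)]

lemma exists_attains {a b : ℕ} (hb : 0 < b) (A : Matrix (Fin a) (Fin b) ℂ) :
    ∃ w : Fin b → ℂ, nsq w = 1 ∧ nsq (A *ᵥ w) = (opNorm A)^2 := by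
  set T := LinearMap.toContinuousLinearMap (Matrix.toEuclideanLin A)
  haveI : Nonempty (Fin b) := ⟨⟨0, hb⟩⟩
  haveI : Nontrivial (EuclideanSpace ℂ (Fin b)) := by infer_instance
  obtain ⟨w0, hw0mem, hw0max⟩ := (isCompact_sphere (0 : EuclideanSpace ℂ (Fin b)) 1).exists_isMaxOn
    (NormedSpace.sphere_nonempty.mpr zero_le_one)
    ((continuous_norm.comp T.continuous).continuousOn)
  have hw0norm : ‖w0‖ = 1 := by simpa using mem_sphere_zero_iff_norm.mp hw0mem
  have hTnorm : ‖T w0‖ = ‖T‖ := by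
    refine le_antisymm (by simpa [hw0norm] using T.le_opNorm w0) ?_
    refine T.opNorm_le_bound (norm_nonneg _) fun x => ?_
    rcases eq_or_ne x 0 with rfl | hx
    · simp
    · have hxpos : (0:ℝ) < ‖x‖ := norm_pos_iff.mpr hx
      have hxs : (((‖x‖⁻¹ : ℝ) : ℂ) • x) ∈ Metric.sphere (0 : EuclideanSpace ℂ (Fin b)) 1 := by
        simp [norm_smul, _root_.abs_of_nonneg (inv_nonneg.mpr (norm_nonneg x)),
          inv_mul_cancel₀ (norm_ne_zero_iff.mpr hx)]
      have h6 : ‖T (((‖x‖⁻¹ : ℝ) : ℂ) • x)‖ ≤ ‖T w0‖ := hw0max hxs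
      rw [_root_.map_smul, norm_smul] at h6
      simp only [Complex.norm_real, norm_inv, norm_norm] at h6
      calc ‖T x‖ = ‖x‖ * (‖x‖⁻¹ * ‖T x‖) := by field_simp
        _ ≤ ‖x‖ * ‖T w0‖ := mul_le_mul_of_nonneg_left h6 (norm_nonneg x)
        _ = ‖T w0‖ * ‖x‖ := mul_comm _ _
  set w : Fin b → ℂ := WithLp.equiv 2 (Fin b → ℂ) w0 with hw
  have hsymm : (WithLp.equiv 2 (Fin b → ℂ)).symm w = w0 := Equiv.symm_apply_apply _ _
  have hn1 : Real.sqrt (nsq w) = 1 := by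
    rw [← norm_euclidean w, hsymm, hw0norm]
  have hTw : (WithLp.equiv 2 (Fin a → ℂ)).symm (A *ᵥ w) = T w0 := by
    rfl
  have hn2 : Real.sqrt (nsq (A *ᵥ w)) = opNorm A := by
    rw [← norm_euclidean (A *ᵥ w), hTw, hTnorm]; rfl
  refine ⟨w, ?_, ?_⟩
  · have := congrArg (fun r => r^2) hn1
    simpa [Real.sq_sqrt (nsq_nonneg w)] using this
  · have := congrArg (fun r => r^2) hn2
    simpa [Real.sq_sqrt (nsq_nonneg (A *ᵥ w))] using this


lemma L_herm {k m n N : ℕ} (C1 : Matrix (Fin k) (Fin m) ℂ) (C2 : Matrix (Fin m) (Fin n) ℂ)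
    (X1 X2 : Matrix (Fin N) (Fin N) ℂ) :
    (1 - LamE C1 C2 X1 X2 - (LamE C1 C2 X1 X2)ᴴ).IsHermitian := by
  unfold Matrix.IsHermitian
  simp only [Matrix.conjTranspose_sub, Matrix.conjTranspose_one,
    Matrix.conjTranspose_conjTranspose]
  abel

lemma L_quadform {k m n N : ℕ} (C1 : Matrix (Fin k) (Fin m) ℂ) (C2 : Matrix (Fin m) (Fin n) ℂ)
    (X1 X2 : Matrix (Fin N) (Fin N) ℂ) (v : (Fin k ⊕ Fin m ⊕ Fin n) × Fin N → ℂ) :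
    star v ⬝ᵥ ((1 - LamE C1 C2 X1 X2 - (LamE C1 C2 X1 X2)ᴴ) *ᵥ v)
      = (nsq v : ℂ) - (star v ⬝ᵥ ((LamE C1 C2 X1 X2) *ᵥ v))
        - star (star v ⬝ᵥ ((LamE C1 C2 X1 X2) *ᵥ v)) := by
  rw [Matrix.sub_mulVec, Matrix.sub_mulVec, Matrix.one_mulVec,
    dotProduct_sub, dotProduct_sub, star_dot_self, dot_conjTranspose]

lemma nsq_group_le {k m n : ℕ} (v : (Fin k ⊕ Fin m ⊕ Fin n) × Fin 2 → ℂ) :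
    nsq (fun p : Fin k => v (Sum.inl p, 0)) + nsq (fun q : Fin m => v (Sum.inr (Sum.inl q), 1))
      + (nsq (fun q : Fin m => v (Sum.inr (Sum.inl q), 0))
        + nsq (fun r : Fin n => v (Sum.inr (Sum.inr r), 1))) ≤ nsq v := by
  unfold nsq
  rw [Fintype.sum_prod_type]
  rw [Fintype.sum_sum_type]
  have h2 : ∀ i : Fin k ⊕ Fin m ⊕ Fin n, (∑ a : Fin 2, Complex.normSq (v (i, a)))
      = Complex.normSq (v (i, 0)) + Complex.normSq (v (i, 1)) := fun i => Fin.sum_univ_two _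
  simp only [h2]
  rw [Fintype.sum_sum_type]
  have e1 : ∀ i : Fin m ⊕ Fin n, (0:ℝ) ≤ Complex.normSq (v (Sum.inr i, 0))
      + Complex.normSq (v (Sum.inr i, 1)) := fun i =>
    add_nonneg (Complex.normSq_nonneg _) (Complex.normSq_nonneg _)
  have hk' : ∑ p : Fin k, Complex.normSq (v (Sum.inl p, 0))
      ≤ ∑ p : Fin k, (Complex.normSq (v (Sum.inl p, 0)) + Complex.normSq (v (Sum.inl p, 1))) :=
    Finset.sum_le_sum fun p _ => le_add_of_nonneg_right (Complex.normSq_nonneg _)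
  have hm' : ∑ q : Fin m, (Complex.normSq (v (Sum.inr (Sum.inl q), 1))
        + Complex.normSq (v (Sum.inr (Sum.inl q), 0)))
      ≤ ∑ q : Fin m, (Complex.normSq (v (Sum.inr (Sum.inl q), 0))
        + Complex.normSq (v (Sum.inr (Sum.inl q), 1))) :=
    Finset.sum_le_sum fun q _ => le_of_eq (add_comm _ _)
  have hn' : ∑ r : Fin n, Complex.normSq (v (Sum.inr (Sum.inr r), 1))
      ≤ ∑ r : Fin n, (Complex.normSq (v (Sum.inr (Sum.inr r), 0))
        + Complex.normSq (v (Sum.inr (Sum.inr r), 1))) :=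
    Finset.sum_le_sum fun r _ => le_add_of_nonneg_left (Complex.normSq_nonneg _)
  have := Finset.sum_add_distrib (s := (Finset.univ : Finset (Fin m)))
    (f := fun q => Complex.normSq (v (Sum.inr (Sum.inl q), 1)))
    (g := fun q => Complex.normSq (v (Sum.inr (Sum.inl q), 0)))
  linarith


lemma nsq_pos_of_ne {a : Type*} [Fintype a] {v : a → ℂ} (hv : v ≠ 0) : 0 < nsq v := by
  obtain ⟨i, hi⟩ := Function.ne_iff.mp hv
  have h1 : 0 < Complex.normSq (v i) := Complex.normSq_pos.mpr hi
  exact lt_of_lt_of_le h1 (normSq_le_nsq v i)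

lemma mem_PE_of_small {k m n : ℕ} (C1 : Matrix (Fin k) (Fin m) ℂ) (C2 : Matrix (Fin m) (Fin n) ℂ)
    (hnC1 : opNorm C1 = 1) (hnC2 : opNorm C2 = 1) (t1 t2 : ℂ) (Z1 Z2 : Matrix (Fin 2) (Fin 2) ℂ)
    (hc : max (‖t1‖) (‖t2‖)
        + 2 * (∑ P, ∑ Q, ‖(E1mat k m n C1 ⊗ₖ Z1 + E2mat k m n C2 ⊗ₖ Z2) P Q‖) < 1) :
    (!![0, t1; 0, 0] + Z1, !![0, t2; 0, 0] + Z2) ∈ PE k m n C1 C2 2 := by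
  set c : ℝ := max (‖t1‖) (‖t2‖) with hcdef
  set KZ : ℝ := ∑ P, ∑ Q, ‖(E1mat k m n C1 ⊗ₖ Z1 + E2mat k m n C2 ⊗ₖ Z2) P Q‖ with hKZ
  have hc0 : 0 ≤ c := le_trans (norm_nonneg _) (le_max_left _ _)
  have hKZ0 : 0 ≤ KZ :=
    Finset.sum_nonneg fun _ _ => Finset.sum_nonneg fun _ _ => norm_nonneg _
  refine Set.mem_setOf_eq ▸ Matrix.PosDef.of_dotProduct_mulVec_pos (L_herm C1 C2 _ _) fun ⦃v⦄ hv => ?_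
  have hsplit : LamE C1 C2 (!![0, t1; 0, 0] + Z1) (!![0, t2; 0, 0] + Z2)
      = LamE C1 C2 !![0, t1; 0, 0] !![0, t2; 0, 0]
        + (E1mat k m n C1 ⊗ₖ Z1 + E2mat k m n C2 ⊗ₖ Z2) := by
    unfold LamE
    rw [Matrix.kronecker_add, Matrix.kronecker_add]
    abel
  rw [L_quadform]
  set S : ℂ := star v ⬝ᵥ
    ((LamE C1 C2 (!![0, t1; 0, 0] + Z1) (!![0, t2; 0, 0] + Z2)) *ᵥ v) with hS
  set St : ℂ := star v ⬝ᵥ ((LamE C1 C2 !![0, t1; 0, 0] !![0, t2; 0, 0]) *ᵥ v) with hSt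
  set SZ : ℂ := star v ⬝ᵥ ((E1mat k m n C1 ⊗ₖ Z1 + E2mat k m n C2 ⊗ₖ Z2) *ᵥ v) with hSZ
  have hSsum : S = St + SZ := by
    rw [hS, hsplit, Matrix.add_mulVec, dotProduct_add]
  -- bound on |St|
  set a1 : ℝ := nsq (fun p : Fin k => v (Sum.inl p, 0)) with ha1
  set b1 : ℝ := nsq (fun q : Fin m => v (Sum.inr (Sum.inl q), 1)) with hb1
  set a2 : ℝ := nsq (fun q : Fin m => v (Sum.inr (Sum.inl q), 0)) with ha2
  set b2 : ℝ := nsq (fun r : Fin n => v (Sum.inr (Sum.inr r), 1)) with hb2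
  have hSt_bound : ‖St‖ ≤ c / 2 * nsq v := by
    rw [hSt, lam_quadform]
    refine le_trans (norm_add_le _ _) ?_
    rw [norm_mul, norm_mul]
    have h1 : ‖star (fun p => v (Sum.inl p, 0))
        ⬝ᵥ (C1 *ᵥ fun q => v (Sum.inr (Sum.inl q), 1))‖ ≤ Real.sqrt a1 * Real.sqrt b1 := by
      have := abs_dot_mulVec_le C1 (fun p => v (Sum.inl p, 0))
        (fun q => v (Sum.inr (Sum.inl q), 1))
      rwa [hnC1, one_mul] at this
    have h2 : ‖star (fun q => v (Sum.inr (Sum.inl q), 0))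
        ⬝ᵥ (C2 *ᵥ fun r => v (Sum.inr (Sum.inr r), 1))‖ ≤ Real.sqrt a2 * Real.sqrt b2 := by
      have := abs_dot_mulVec_le C2 (fun q => v (Sum.inr (Sum.inl q), 0))
        (fun r => v (Sum.inr (Sum.inr r), 1))
      rwa [hnC2, one_mul] at this
    have h3 : Real.sqrt a1 * Real.sqrt b1 ≤ (a1 + b1) / 2 :=
      sqrt_mul_sqrt_le _ _ (nsq_nonneg _) (nsq_nonneg _)
    have h4 : Real.sqrt a2 * Real.sqrt b2 ≤ (a2 + b2) / 2 :=
      sqrt_mul_sqrt_le _ _ (nsq_nonneg _) (nsq_nonneg _)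
    have h5 : a1 + b1 + (a2 + b2) ≤ nsq v := nsq_group_le v
    have h6 : ‖t1‖ ≤ c := le_max_left _ _
    have h7 : ‖t2‖ ≤ c := le_max_right _ _
    have h8 : ‖t1‖ * ‖star (fun p => v (Sum.inl p, 0))
        ⬝ᵥ (C1 *ᵥ fun q => v (Sum.inr (Sum.inl q), 1))‖ ≤ c * ((a1 + b1) / 2) :=
      mul_le_mul h6 (le_trans h1 h3) (norm_nonneg _) hc0
    have h9 : ‖t2‖ * ‖star (fun q => v (Sum.inr (Sum.inl q), 0))
        ⬝ᵥ (C2 *ᵥ fun r => v (Sum.inr (Sum.inr r), 1))‖ ≤ c * ((a2 + b2) / 2) :=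
      mul_le_mul h7 (le_trans h2 h4) (norm_nonneg _) hc0
    nlinarith
  have hSZ_bound : ‖SZ‖ ≤ KZ * nsq v := abs_quadform_le _ v
  have hnv : 0 < nsq v := nsq_pos_of_ne hv
  have hre : S.re ≤ (c / 2 + KZ) * nsq v := by
    have := Complex.abs_re_le_norm S
    have habs : ‖S‖ ≤ c / 2 * nsq v + KZ * nsq v := by
      rw [hSsum]
      exact le_trans (norm_add_le _ _) (add_le_add hSt_bound hSZ_bound)
    have : S.re ≤ ‖S‖ := Complex.re_le_norm S
    linarith
  rw [Complex.lt_def]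
  constructor
  · simp only [Complex.zero_re, Complex.sub_re, Complex.ofReal_re]
    have hstar : (star S).re = S.re := Complex.conj_re S
    rw [hstar]
    have hlt : (c / 2 + KZ) * nsq v < (1/2) * nsq v := by
      have : c / 2 + KZ < 1 / 2 := by linarith
      exact mul_lt_mul_of_pos_right this hnv
    linarith
  · simp only [Complex.zero_im, Complex.sub_im, Complex.ofReal_im]
    have hstar : (star S).im = -S.im := Complex.conj_im S
    rw [hstar]
    ring


def vspec1 {k m n : ℕ} (al be : ℂ) (u : Fin k → ℂ) (w : Fin m → ℂ) :
    (Fin k ⊕ Fin m ⊕ Fin n) × Fin 2 → ℂ :=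
  fun P =>
    match P with
    | (Sum.inl p, j) => if j = 0 then al * u p else 0
    | (Sum.inr (Sum.inl q), j) => if j = 1 then be * w q else 0
    | (Sum.inr (Sum.inr _), _) => 0

def vspec2 {k m n : ℕ} (al : ℂ) (be : ℂ) (u : Fin m → ℂ) (w : Fin n → ℂ) :
    (Fin k ⊕ Fin m ⊕ Fin n) × Fin 2 → ℂ :=
  fun P =>
    match P with
    | (Sum.inl _, _) => 0
    | (Sum.inr (Sum.inl q), j) => if j = 0 then al * u q else 0
    | (Sum.inr (Sum.inr r), j) => if j = 1 then be * w r else 0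

lemma nsq_vspec1 {k m n : ℕ} (al be : ℂ) (u : Fin k → ℂ) (w : Fin m → ℂ) :
    nsq (vspec1 (n := n) al be u w)
      = Complex.normSq al * nsq u + Complex.normSq be * nsq w := by
  unfold nsq vspec1
  rw [Fintype.sum_prod_type, Fintype.sum_sum_type, Fintype.sum_sum_type]
  simp [Fin.sum_univ_two, Complex.normSq_mul, Finset.mul_sum]

lemma nsq_vspec2 {k m n : ℕ} (al be : ℂ) (u : Fin m → ℂ) (w : Fin n → ℂ) :
    nsq (vspec2 (k := k) al be u w)
      = Complex.normSq al * nsq u + Complex.normSq be * nsq w := by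
  unfold nsq vspec2
  rw [Fintype.sum_prod_type, Fintype.sum_sum_type, Fintype.sum_sum_type]
  simp [Fin.sum_univ_two, Complex.normSq_mul, Finset.mul_sum]

lemma lam_quadform_vspec1 {k m n : ℕ} (C1 : Matrix (Fin k) (Fin m) ℂ)
    (C2 : Matrix (Fin m) (Fin n) ℂ) (t1 t2 al be : ℂ) (u : Fin k → ℂ) (w : Fin m → ℂ) :
    star (vspec1 (n := n) al be u w)
        ⬝ᵥ ((LamE C1 C2 !![0, t1; 0, 0] !![0, t2; 0, 0]) *ᵥ vspec1 (n := n) al be u w)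
      = t1 * ((starRingEnd ℂ) al * be) * (star u ⬝ᵥ (C1 *ᵥ w)) := by
  rw [lam_quadform]
  have e1 : (fun p => vspec1 (n := n) al be u w (Sum.inl p, 0)) = fun p => al * u p := by
    funext p; simp [vspec1]
  have e2 : (fun q => vspec1 (n := n) al be u w (Sum.inr (Sum.inl q), 1))
      = fun q => be * w q := by
    funext q; simp [vspec1]
  have e3 : (fun q => vspec1 (n := n) al be u w (Sum.inr (Sum.inl q), 0))
      = fun _ => (0 : ℂ) := by
    funext q; simp [vspec1]
  have e4 : (fun r => vspec1 (n := n) al be u w (Sum.inr (Sum.inr r), 1))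
      = fun _ => (0 : ℂ) := by
    funext r; simp [vspec1]
  rw [e1, e2, e3, e4]
  have hz : star (fun _ : Fin m => (0:ℂ))
      ⬝ᵥ (C2 *ᵥ fun _ : Fin n => (0:ℂ)) = 0 := by
    simp [dotProduct]
  rw [hz, mul_zero, add_zero]
  simp only [dotProduct, Matrix.mulVec, Pi.star_apply, star_mul', Finset.mul_sum,
    Finset.sum_mul]
  refine Finset.sum_congr rfl fun p _ => ?_
  refine Finset.sum_congr rfl fun q _ => ?_
  simp only [Complex.star_def]
  ring

lemma lam_quadform_vspec2 {k m n : ℕ} (C1 : Matrix (Fin k) (Fin m) ℂ)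
    (C2 : Matrix (Fin m) (Fin n) ℂ) (t1 t2 al be : ℂ) (u : Fin m → ℂ) (w : Fin n → ℂ) :
    star (vspec2 (k := k) al be u w)
        ⬝ᵥ ((LamE C1 C2 !![0, t1; 0, 0] !![0, t2; 0, 0]) *ᵥ vspec2 (k := k) al be u w)
      = t2 * ((starRingEnd ℂ) al * be) * (star u ⬝ᵥ (C2 *ᵥ w)) := by
  rw [lam_quadform]
  have e1 : (fun p => vspec2 (k := k) al be u w (Sum.inl p, 0)) = fun _ => (0:ℂ) := by
    funext p; simp [vspec2]
  have e2 : (fun q => vspec2 (k := k) al be u w (Sum.inr (Sum.inl q), 1))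
      = fun _ => (0 : ℂ) := by
    funext q; simp [vspec2]
  have e3 : (fun q => vspec2 (k := k) al be u w (Sum.inr (Sum.inl q), 0))
      = fun q => al * u q := by
    funext q; simp [vspec2]
  have e4 : (fun r => vspec2 (k := k) al be u w (Sum.inr (Sum.inr r), 1))
      = fun r => be * w r := by
    funext r; simp [vspec2]
  rw [e1, e2, e3, e4]
  have hz : star (fun _ : Fin k => (0:ℂ))
      ⬝ᵥ (C1 *ᵥ fun _ : Fin m => (0:ℂ)) = 0 := by
    simp [dotProduct]
  rw [hz, mul_zero, zero_add]
  simp only [dotProduct, Matrix.mulVec, Pi.star_apply, star_mul', Finset.mul_sum,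
    Finset.sum_mul]
  refine Finset.sum_congr rfl fun p _ => ?_
  refine Finset.sum_congr rfl fun q _ => ?_
  simp only [Complex.star_def]
  ring


lemma quad_re_nonneg_of_closure {k m n N : ℕ} (C1 : Matrix (Fin k) (Fin m) ℂ)
    (C2 : Matrix (Fin m) (Fin n) ℂ) (v : (Fin k ⊕ Fin m ⊕ Fin n) × Fin N → ℂ)
    (X : Matrix (Fin N) (Fin N) ℂ × Matrix (Fin N) (Fin N) ℂ)
    (hX : X ∈ closure (PE k m n C1 C2 N)) :
    0 ≤ (star v ⬝ᵥ ((1 - LamE C1 C2 X.1 X.2 - (LamE C1 C2 X.1 X.2)ᴴ) *ᵥ v)).re := by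
  have hLam : Continuous fun Y : Matrix (Fin N) (Fin N) ℂ × Matrix (Fin N) (Fin N) ℂ =>
      LamE C1 C2 Y.1 Y.2 := by
    refine continuous_matrix fun P Q => ?_
    simp only [LamE, Matrix.add_apply, Matrix.kroneckerMap_apply]
    exact (continuous_const.mul (continuous_fst.matrix_elem P.2 Q.2)).add
      (continuous_const.mul (continuous_snd.matrix_elem P.2 Q.2))
  have hL : Continuous fun Y : Matrix (Fin N) (Fin N) ℂ × Matrix (Fin N) (Fin N) ℂ =>
      (1 - LamE C1 C2 Y.1 Y.2 - (LamE C1 C2 Y.1 Y.2)ᴴ) :=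
    (continuous_const.sub hLam).sub hLam.matrix_conjTranspose
  have hf : Continuous fun Y : Matrix (Fin N) (Fin N) ℂ × Matrix (Fin N) (Fin N) ℂ =>
      (star v ⬝ᵥ ((1 - LamE C1 C2 Y.1 Y.2 - (LamE C1 C2 Y.1 Y.2)ᴴ) *ᵥ v)).re :=
    Complex.continuous_re.comp
      (Continuous.dotProduct continuous_const (hL.matrix_mulVec continuous_const))
  have hsub : PE k m n C1 C2 N ⊆ {Y | 0 ≤ (star v ⬝ᵥ
      ((1 - LamE C1 C2 Y.1 Y.2 - (LamE C1 C2 Y.1 Y.2)ᴴ) *ᵥ v)).re} := by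
    intro Y hY
    rcases eq_or_ne v 0 with rfl | hv
    · simp [dotProduct]
    · have := hY.dotProduct_mulVec_pos hv
      have hre := (Complex.lt_def.mp this).1
      simp only [Complex.zero_re] at hre
      exact le_of_lt hre
  have hclosed : IsClosed {Y : Matrix (Fin N) (Fin N) ℂ × Matrix (Fin N) (Fin N) ℂ |
      0 ≤ (star v ⬝ᵥ ((1 - LamE C1 C2 Y.1 Y.2 - (LamE C1 C2 Y.1 Y.2)ᴴ) *ᵥ v)).re} :=
    isClosed_le continuous_const hf
  exact (closure_minimal hsub hclosed) hX


lemma nsq_u_facts {a b : ℕ} (hb : 0 < b) (A : Matrix (Fin a) (Fin b) ℂ) (hnA : opNorm A = 1) :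
    ∃ w : Fin b → ℂ, nsq w = 1 ∧ nsq (A *ᵥ w) = 1 := by
  obtain ⟨w, hw, hAw⟩ := exists_attains hb A
  exact ⟨w, hw, by rw [hAw, hnA, one_pow]⟩

lemma abs_le_of_closure {k m n : ℕ} (hm : 0 < m) (hn : 0 < n)
    (C1 : Matrix (Fin k) (Fin m) ℂ) (C2 : Matrix (Fin m) (Fin n) ℂ)
    (hnC1 : opNorm C1 = 1) (hnC2 : opNorm C2 = 1) (t1 t2 : ℂ)
    (hX : (!![0, t1; 0, 0], !![0, t2; 0, 0]) ∈ closure (PE k m n C1 C2 2)) :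
    ‖t1‖ ≤ 1 ∧ ‖t2‖ ≤ 1 := by
  constructor
  · obtain ⟨w, hw, hAw⟩ := nsq_u_facts hm C1 hnC1
    set u := C1 *ᵥ w with hu
    have huw : star u ⬝ᵥ (C1 *ᵥ w) = 1 := by
      rw [← hu, star_dot_self, hAw, Complex.ofReal_one]
    rcases eq_or_ne t1 0 with rfl | ht1
    · simp
    · set r := ‖t1‖ with hrdef
      have hr : 0 < r := norm_pos_iff.mpr ht1
      have hrne : (r : ℂ) ≠ 0 := Complex.ofReal_ne_zero.mpr hr.ne'
      set be := (starRingEnd ℂ) t1 / (r : ℂ) with hbe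
      have h0 := quad_re_nonneg_of_closure C1 C2 (vspec1 (n := n) 1 be u w) _ hX
      rw [L_quadform, lam_quadform_vspec1] at h0
      have hT : t1 * ((starRingEnd ℂ) 1 * be) * (star u ⬝ᵥ (C1 *ᵥ w)) = (r : ℂ) := by
        rw [huw, mul_one, _root_.map_one, one_mul, hbe, ← mul_div_assoc, Complex.mul_conj,
          show Complex.normSq t1 = r^2 by rw [Complex.normSq_eq_norm_sq]]
        push_cast
        field_simp
      have hbe2 : Complex.normSq be = 1 := by
        rw [hbe, Complex.normSq_div, Complex.normSq_conj, Complex.normSq_ofReal,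
          show Complex.normSq t1 = r^2 by rw [Complex.normSq_eq_norm_sq]]
        field_simp [hr.ne']
      rw [hT, nsq_vspec1, hw, hAw, hbe2] at h0
      simp only [Complex.normSq_one, one_mul, mul_one, Complex.sub_re, Complex.ofReal_re,
        Complex.star_def, Complex.conj_re, Complex.conj_ofReal] at h0
      linarith
  · obtain ⟨w, hw, hAw⟩ := nsq_u_facts hn C2 hnC2
    set u := C2 *ᵥ w with hu
    have huw : star u ⬝ᵥ (C2 *ᵥ w) = 1 := by
      rw [← hu, star_dot_self, hAw, Complex.ofReal_one]
    rcases eq_or_ne t2 0 with rfl | ht2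
    · simp
    · set r := ‖t2‖ with hrdef
      have hr : 0 < r := norm_pos_iff.mpr ht2
      have hrne : (r : ℂ) ≠ 0 := Complex.ofReal_ne_zero.mpr hr.ne'
      set be := (starRingEnd ℂ) t2 / (r : ℂ) with hbe
      have h0 := quad_re_nonneg_of_closure C1 C2 (vspec2 (k := k) 1 be u w) _ hX
      rw [L_quadform, lam_quadform_vspec2] at h0
      have hT : t2 * ((starRingEnd ℂ) 1 * be) * (star u ⬝ᵥ (C2 *ᵥ w)) = (r : ℂ) := by
        rw [huw, mul_one, _root_.map_one, one_mul, hbe, ← mul_div_assoc, Complex.mul_conj,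
          show Complex.normSq t2 = r^2 by rw [Complex.normSq_eq_norm_sq]]
        push_cast
        field_simp
      have hbe2 : Complex.normSq be = 1 := by
        rw [hbe, Complex.normSq_div, Complex.normSq_conj, Complex.normSq_ofReal,
          show Complex.normSq t2 = r^2 by rw [Complex.normSq_eq_norm_sq]]
        field_simp [hr.ne']
      rw [hT, nsq_vspec2, hw, hAw, hbe2] at h0
      simp only [Complex.normSq_one, one_mul, mul_one, Complex.sub_re, Complex.ofReal_re,
        Complex.star_def, Complex.conj_re, Complex.conj_ofReal] at h0
      linarith


lemma nsq_ne_zero {a : Type*} [Fintype a] {u : a → ℂ} (h : nsq u = 1) : u ≠ 0 := by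
  intro h0
  rw [h0] at h
  simp [nsq] at h

lemma not_mem_PE_of_eq_one {k m n : ℕ} (hm : 0 < m) (hn : 0 < n)
    (C1 : Matrix (Fin k) (Fin m) ℂ) (C2 : Matrix (Fin m) (Fin n) ℂ)
    (hnC1 : opNorm C1 = 1) (hnC2 : opNorm C2 = 1) (t1 t2 : ℂ)
    (h : ‖t1‖ = 1 ∨ ‖t2‖ = 1) :
    (!![0, t1; 0, 0], !![0, t2; 0, 0]) ∉ PE k m n C1 C2 2 := by
  intro hPE
  have hPE' : (1 - LamE C1 C2 !![0, t1; 0, 0] !![0, t2; 0, 0]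
      - (LamE C1 C2 !![0, t1; 0, 0] !![0, t2; 0, 0])ᴴ).PosDef := hPE
  rcases h with h1 | h2
  · obtain ⟨w, hw, hAw⟩ := nsq_u_facts hm C1 hnC1
    set u := C1 *ᵥ w with hu
    have huw : star u ⬝ᵥ (C1 *ᵥ w) = 1 := by
      rw [← hu, star_dot_self, hAw, Complex.ofReal_one]
    set be := (starRingEnd ℂ) t1 with hbe
    have hune : u ≠ 0 := nsq_ne_zero hAw
    obtain ⟨p, hp⟩ := Function.ne_iff.mp hune
    simp only [Pi.zero_apply] at hp
    have hv : vspec1 (n := n) 1 be u w ≠ 0 := by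
      refine Function.ne_iff.mpr ⟨(Sum.inl p, 0), ?_⟩
      simp [vspec1, hp]
    have h2 := hPE'.dotProduct_mulVec_pos hv
    rw [L_quadform, lam_quadform_vspec1] at h2
    have hT : t1 * ((starRingEnd ℂ) 1 * be) * (star u ⬝ᵥ (C1 *ᵥ w)) = 1 := by
      rw [huw, mul_one, _root_.map_one, one_mul, hbe, Complex.mul_conj,
        show Complex.normSq t1 = 1 by rw [Complex.normSq_eq_norm_sq, h1, one_pow]]
      exact Complex.ofReal_one
    have hbe2 : Complex.normSq be = 1 := by
      rw [hbe, Complex.normSq_conj, Complex.normSq_eq_norm_sq, h1, one_pow]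
    rw [hT, nsq_vspec1, hw, hAw, hbe2] at h2
    have := (Complex.lt_def.mp h2).1
    simp at this
  · obtain ⟨w, hw, hAw⟩ := nsq_u_facts hn C2 hnC2
    set u := C2 *ᵥ w with hu
    have huw : star u ⬝ᵥ (C2 *ᵥ w) = 1 := by
      rw [← hu, star_dot_self, hAw, Complex.ofReal_one]
    set be := (starRingEnd ℂ) t2 with hbe
    have hune : u ≠ 0 := nsq_ne_zero hAw
    obtain ⟨p, hp⟩ := Function.ne_iff.mp hune
    simp only [Pi.zero_apply] at hp
    have hv : vspec2 (k := k) 1 be u w ≠ 0 := by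
      refine Function.ne_iff.mpr ⟨(Sum.inr (Sum.inl p), 0), ?_⟩
      simp [vspec2, hp]
    have h2' := hPE'.dotProduct_mulVec_pos hv
    rw [L_quadform, lam_quadform_vspec2] at h2'
    have hT : t2 * ((starRingEnd ℂ) 1 * be) * (star u ⬝ᵥ (C2 *ᵥ w)) = 1 := by
      rw [huw, mul_one, _root_.map_one, one_mul, hbe, Complex.mul_conj,
        show Complex.normSq t2 = 1 by rw [Complex.normSq_eq_norm_sq, h2, one_pow]]
      exact Complex.ofReal_one
    have hbe2 : Complex.normSq be = 1 := by
      rw [hbe, Complex.normSq_conj, Complex.normSq_eq_norm_sq, h2, one_pow]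
    rw [hT, nsq_vspec2, hw, hAw, hbe2] at h2'
    have := (Complex.lt_def.mp h2').1
    simp at this


lemma smul_tmat (z tt : ℂ) : z • (!![0, tt; 0, 0] : Matrix (Fin 2) (Fin 2) ℂ)
    = !![0, z * tt; 0, 0] := by
  ext i j
  fin_cases i <;> fin_cases j <;> simp

lemma mem_closure_of_le_one {k m n : ℕ} (C1 : Matrix (Fin k) (Fin m) ℂ)
    (C2 : Matrix (Fin m) (Fin n) ℂ) (hnC1 : opNorm C1 = 1) (hnC2 : opNorm C2 = 1)
    (t1 t2 : ℂ) (ht1 : ‖t1‖ ≤ 1) (ht2 : ‖t2‖ ≤ 1) :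
    (!![0, t1; 0, 0], !![0, t2; 0, 0]) ∈ closure (PE k m n C1 C2 2) := by
  set g : ℝ → Matrix (Fin 2) (Fin 2) ℂ × Matrix (Fin 2) (Fin 2) ℂ :=
    fun s => ((s : ℂ) • !![0, t1; 0, 0], (s : ℂ) • !![0, t2; 0, 0]) with hg
  have hgc : Continuous g :=
    (Complex.continuous_ofReal.smul continuous_const).prodMk
      (Complex.continuous_ofReal.smul continuous_const)
  have hs : Filter.Tendsto (fun j : ℕ => 1 - 1 / (j + 1 : ℝ)) Filter.atTop (nhds 1) := by
    have : Filter.Tendsto (fun n : ℕ => 1 / ((n : ℝ) + 1)) Filter.atTop (nhds 0) :=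
      tendsto_one_div_add_atTop_nhds_zero_nat
    simpa using Filter.Tendsto.const_sub 1 this
  have hg1 : g 1 = (!![0, t1; 0, 0], !![0, t2; 0, 0]) := by
    simp [hg]
  have htend : Filter.Tendsto (fun j : ℕ => g (1 - 1 / (j + 1 : ℝ))) Filter.atTop
      (nhds (!![0, t1; 0, 0], !![0, t2; 0, 0])) := by
    rw [← hg1]
    exact (hgc.tendsto 1).comp hs
  refine mem_closure_of_tendsto htend (Filter.Eventually.of_forall fun j => ?_)
  set s : ℝ := 1 - 1 / (j + 1 : ℝ) with hsdef
  have hjpos : (0 : ℝ) < 1 / (j + 1 : ℝ) := by positivity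
  have hjle : 1 / (j + 1 : ℝ) ≤ 1 := by
    rw [div_le_one (by positivity)]
    linarith
  have hs0 : 0 ≤ s := by rw [hsdef]; linarith
  have hs1 : s < 1 := by rw [hsdef]; linarith
  have hK0 : (∑ P, ∑ Q, ‖(E1mat k m n C1 ⊗ₖ (0 : Matrix (Fin 2) (Fin 2) ℂ)
      + E2mat k m n C2 ⊗ₖ (0 : Matrix (Fin 2) (Fin 2) ℂ)) P Q‖) = 0 := by
    simp [Matrix.kroneckerMap_apply]
  have habs1 : ‖(s : ℂ) * t1‖ ≤ s := by
    rw [norm_mul, Complex.norm_of_nonneg hs0]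
    calc s * ‖t1‖ ≤ s * 1 := mul_le_mul_of_nonneg_left ht1 hs0
      _ = s := mul_one s
  have habs2 : ‖(s : ℂ) * t2‖ ≤ s := by
    rw [norm_mul, Complex.norm_of_nonneg hs0]
    calc s * ‖t2‖ ≤ s * 1 := mul_le_mul_of_nonneg_left ht2 hs0
      _ = s := mul_one s
  have hcond : max (‖(s : ℂ) * t1‖) (‖(s : ℂ) * t2‖)
      + 2 * (∑ P, ∑ Q, ‖(E1mat k m n C1 ⊗ₖ (0 : Matrix (Fin 2) (Fin 2) ℂ)
        + E2mat k m n C2 ⊗ₖ (0 : Matrix (Fin 2) (Fin 2) ℂ)) P Q‖) < 1 := by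
    rw [hK0]
    have := max_le habs1 habs2
    linarith
  have hmem := mem_PE_of_small C1 C2 hnC1 hnC2 ((s : ℂ) * t1) ((s : ℂ) * t2) 0 0 hcond
  have hpair : g s = (!![0, (s:ℂ) * t1; 0, 0] + 0, !![0, (s:ℂ) * t2; 0, 0] + 0) := by
    rw [hg]
    simp only [add_zero]
    rw [smul_tmat, smul_tmat]
  rw [hpair]
  exact hmem

lemma mem_interior_of_lt_one {k m n : ℕ} (C1 : Matrix (Fin k) (Fin m) ℂ)
    (C2 : Matrix (Fin m) (Fin n) ℂ) (hnC1 : opNorm C1 = 1) (hnC2 : opNorm C2 = 1)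
    (t1 t2 : ℂ) (ht1 : ‖t1‖ < 1) (ht2 : ‖t2‖ < 1) :
    (!![0, t1; 0, 0], !![0, t2; 0, 0]) ∈ interior (PE k m n C1 C2 2) := by
  set c : ℝ := max (‖t1‖) (‖t2‖) with hc
  have hc1 : c < 1 := max_lt ht1 ht2
  set h : Matrix (Fin 2) (Fin 2) ℂ × Matrix (Fin 2) (Fin 2) ℂ → ℝ := fun X =>
    ∑ P, ∑ Q, ‖(E1mat k m n C1 ⊗ₖ (X.1 - !![0, t1; 0, 0])
      + E2mat k m n C2 ⊗ₖ (X.2 - !![0, t2; 0, 0])) P Q‖ with hh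
  have hcont : Continuous h := by
    refine continuous_finset_sum _ fun P _ => continuous_finset_sum _ fun Q _ => ?_
    simp only [Matrix.add_apply, Matrix.kroneckerMap_apply, Matrix.sub_apply]
    exact continuous_norm.comp
      ((continuous_const.mul ((continuous_fst.matrix_elem _ _).sub continuous_const)).add
        (continuous_const.mul ((continuous_snd.matrix_elem _ _).sub continuous_const)))
  have hopen : IsOpen {X | c + 2 * h X < 1} :=
    isOpen_lt (continuous_const.add (continuous_const.mul hcont)) continuous_const
  have hmemU : (!![0, t1; 0, 0], !![0, t2; 0, 0]) ∈ {X | c + 2 * h X < 1} := by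
    have hzero : h (!![0, t1; 0, 0], !![0, t2; 0, 0]) = 0 := by
      rw [hh]
      simp [Matrix.kroneckerMap_apply]
    simp only [Set.mem_setOf_eq, hzero]
    linarith
  have hsubU : {X | c + 2 * h X < 1} ⊆ PE k m n C1 C2 2 := by
    rintro ⟨X1, X2⟩ hX
    simp only [Set.mem_setOf_eq, hh] at hX
    have hmem := mem_PE_of_small C1 C2 hnC1 hnC2 t1 t2 (X1 - !![0, t1; 0, 0])
      (X2 - !![0, t2; 0, 0]) hX
    have he1 : !![0, t1; 0, 0] + (X1 - !![0, t1; 0, 0]) = X1 := by abel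
    have he2 : !![0, t2; 0, 0] + (X2 - !![0, t2; 0, 0]) = X2 := by abel
    rwa [he1, he2] at hmem
  exact mem_interior.mpr ⟨_, hsubU, hopen, hmemU⟩

end TXTAux

/-- **Lemma.** For `t = (t₁, t₂) ∈ ℂ²`, the tuple
`X̃(t) = ([[0,t₁],[0,0]], [[0,t₂],[0,0]])` lies in the boundary of `𝔓_E[2]` iff
`|t₁| ≤ 1`, `|t₂| ≤ 1`, and either `|t₁| = 1` or `|t₂| = 1`. -/
theorem tXt_mem_frontier_PE_iff {k m n : ℕ} (hk : 0 < k) (hm : 0 < m) (hn : 0 < n)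
    (C1 : Matrix (Fin k) (Fin m) ℂ) (C2 : Matrix (Fin m) (Fin n) ℂ)
    (hC1 : C1 ≠ 0) (hC2 : C2 ≠ 0) (hnC1 : opNorm C1 = 1) (hnC2 : opNorm C2 = 1)
    (t : ℂ × ℂ) :
    (!![0, t.1; 0, 0], !![0, t.2; 0, 0]) ∈ frontier (PE k m n C1 C2 2) ↔
      ‖t.1‖ ≤ 1 ∧ ‖t.2‖ ≤ 1 ∧
        (‖t.1‖ = 1 ∨ ‖t.2‖ = 1) := by
  rw [frontier, Set.mem_diff]
  constructor
  · rintro ⟨hcl, hint⟩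
    obtain ⟨h1, h2⟩ := TXTAux.abs_le_of_closure hm hn C1 C2 hnC1 hnC2 t.1 t.2 hcl
    refine ⟨h1, h2, ?_⟩
    by_contra hor
    push_neg at hor
    obtain ⟨hne1, hne2⟩ := hor
    exact hint (TXTAux.mem_interior_of_lt_one C1 C2 hnC1 hnC2 t.1 t.2
      (lt_of_le_of_ne h1 hne1) (lt_of_le_of_ne h2 hne2))
  · rintro ⟨h1, h2, hor⟩
    refine ⟨TXTAux.mem_closure_of_le_one C1 C2 hnC1 hnC2 t.1 t.2 h1 h2, ?_⟩
    intro hint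
    exact TXTAux.not_mem_PE_of_eq_one hm hn C1 C2 hnC1 hnC2 t.1 t.2 hor (interior_subset hint)
end

section
/- Let Θ = {(λ, μ) ∈ ℂ² : |λ|² C₁*C₁ + |μ|² C₂C₂* ≺ I_m} and, for κ, λ, μ, ν ∈ ℂ, let T(κ, λ, μ, ν) ∈ M₃(ℂ)² be the pair ( [[0, λ, 0],[0, 0, κ],[0, 0, 0]], [[0, ν, 0],[0, 0, μ],[0, 0, 0]] ). If (λ, μ) ∈ Θ and |κ| < 1 and |ν| < 1, then T(κ, λ, μ, ν) ∈ 𝔓_E[3]. -/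
open Matrix Kronecker
open scoped ComplexOrder

/-- `Θ = {(λ, μ) ∈ ℂ² : |λ|² C₁*C₁ + |μ|² C₂C₂* ≺ I_m}`. -/
noncomputable def Theta {k m n : ℕ} (C1 : Matrix (Fin k) (Fin m) ℂ)
    (C2 : Matrix (Fin m) (Fin n) ℂ) : Set (ℂ × ℂ) :=
  {p | ((1 : Matrix (Fin m) (Fin m) ℂ)
    - (((‖p.1‖ : ℂ) ^ 2) • (C1ᴴ * C1)
        + ((‖p.2‖ : ℂ) ^ 2) • (C2 * C2ᴴ))).PosDef}

/-- The pair of `3 × 3` matrices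
`T(κ, λ, μ, ν) = ([[0,λ,0],[0,0,κ],[0,0,0]], [[0,ν,0],[0,0,μ],[0,0,0]])`. -/
def Tmat (κ lam μ ν : ℂ) : Matrix (Fin 3) (Fin 3) ℂ × Matrix (Fin 3) (Fin 3) ℂ :=
  (!![0, lam, 0; 0, 0, κ; 0, 0, 0], !![0, ν, 0; 0, 0, μ; 0, 0, 0])

/-! ### Auxiliary lemmas -/

noncomputable def sqn {ι : Type*} [Fintype ι] (x : ι → ℂ) : ℝ := ∑ i, Complex.normSq (x i)

lemma sqn_nonneg {ι : Type*} [Fintype ι] (x : ι → ℂ) : 0 ≤ sqn x :=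
  Finset.sum_nonneg fun _ _ => Complex.normSq_nonneg _

lemma star_dot_self {ι : Type*} [Fintype ι] (x : ι → ℂ) : star x ⬝ᵥ x = (sqn x : ℂ) := by
  simp [dotProduct, sqn, Complex.normSq_eq_conj_mul_self, Pi.star_apply]

lemma sqn_smul {ι : Type*} [Fintype ι] (c : ℂ) (x : ι → ℂ) :
    sqn (c • x) = Complex.normSq c * sqn x := by
  simp [sqn, Finset.mul_sum, Complex.normSq_mul]

lemma sqn_pos {ι : Type*} [Fintype ι] {x : ι → ℂ} (hx : x ≠ 0) : 0 < sqn x := by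
  obtain ⟨i, hi⟩ := Function.ne_iff.mp hx
  exact Finset.sum_pos' (fun _ _ => Complex.normSq_nonneg _)
    ⟨i, Finset.mem_univ i, Complex.normSq_pos.mpr hi⟩

lemma wpt (c p q : ℂ) :
    2 * (c * ((starRingEnd ℂ) p * q)).re ≤
      ‖c‖ * (Complex.normSq p + Complex.normSq q) := by
  have h1 : (c * ((starRingEnd ℂ) p * q)).re ≤ ‖c‖ * (‖p‖ * ‖q‖) := by
    refine le_trans (Complex.re_le_norm _) ?_
    simp [_root_.map_mul]
  have h2 : 2 * (‖p‖ * ‖q‖) ≤ Complex.normSq p + Complex.normSq q := by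
    rw [← Complex.sq_norm, ← Complex.sq_norm]
    nlinarith [sq_nonneg (‖p‖ - ‖q‖)]
  nlinarith [norm_nonneg c, norm_nonneg p, norm_nonneg q]

lemma wdot {ι : Type*} [Fintype ι] (c : ℂ) (u w : ι → ℂ) :
    2 * (c * (star u ⬝ᵥ w)).re ≤ ‖c‖ * (sqn u + sqn w) := by
  have : (c * (star u ⬝ᵥ w)) = ∑ i, c * ((starRingEnd ℂ) (u i) * w i) := by
    simp [dotProduct, Finset.mul_sum, Pi.star_apply]
  rw [this, Complex.re_sum, Finset.mul_sum, sqn, sqn, ← Finset.sum_add_distrib,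
    Finset.mul_sum]
  exact Finset.sum_le_sum fun i _ => wpt c (u i) (w i)

lemma wdot1 {ι : Type*} [Fintype ι] (u w : ι → ℂ) :
    2 * (star u ⬝ᵥ w).re ≤ sqn u + sqn w := by
  simpa using wdot 1 u w

lemma sqn_eq_norm_sq {p : ℕ} (v : Fin p → ℂ) :
    sqn v = ‖(WithLp.equiv 2 (Fin p → ℂ)).symm v‖ ^ 2 := by
  rw [EuclideanSpace.norm_eq]
  rw [Real.sq_sqrt (by positivity)]
  simp [sqn, Complex.normSq_eq_norm_sq]

lemma sqn_mulVec_le {a b : ℕ} (A : Matrix (Fin a) (Fin b) ℂ) (h : opNorm A = 1)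
    (v : Fin b → ℂ) : sqn (A *ᵥ v) ≤ sqn v := by
  have key := (LinearMap.toContinuousLinearMap (Matrix.toEuclideanLin A)).le_opNorm
    ((WithLp.equiv 2 (Fin b → ℂ)).symm v)
  rw [show ‖LinearMap.toContinuousLinearMap (Matrix.toEuclideanLin A)‖ = 1 from h, one_mul] at key
  have e : (LinearMap.toContinuousLinearMap (Matrix.toEuclideanLin A))
      ((WithLp.equiv 2 (Fin b → ℂ)).symm v) = (WithLp.equiv 2 (Fin a → ℂ)).symm (A *ᵥ v) := by
    simp [LinearMap.coe_toContinuousLinearMap']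
  rw [e] at key
  rw [sqn_eq_norm_sq, sqn_eq_norm_sq]
  exact pow_le_pow_left₀ (norm_nonneg _) key 2

lemma star_dot_mulVec {α β : Type*} [Fintype α] [Fintype β] (A : Matrix α β ℂ) (v : α → ℂ) (w : β → ℂ) :
    star v ⬝ᵥ (A *ᵥ w) = star (Aᴴ *ᵥ v) ⬝ᵥ w := by
  rw [dotProduct_mulVec, star_mulVec, conjTranspose_conjTranspose]

lemma star_dot_comm {ι : Type*} [Fintype ι] (v w : ι → ℂ) :
    star w ⬝ᵥ v = star (star v ⬝ᵥ w) := by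
  simp only [dotProduct, Pi.star_apply, star_sum, star_mul']
  exact Finset.sum_congr rfl fun i _ => by simp [mul_comm]

lemma quadE1 {k m n : ℕ} (C1 : Matrix (Fin k) (Fin m) ℂ) (lam κ : ℂ)
    (x : (Fin k ⊕ Fin m ⊕ Fin n) × Fin 3 → ℂ) :
    star x ⬝ᵥ ((E1mat k m n C1 ⊗ₖ !![0, lam, 0; 0, 0, κ; 0, 0, 0]) *ᵥ x) =
      lam * (star (fun a => x (Sum.inl a, 0)) ⬝ᵥ (C1 *ᵥ fun b => x (Sum.inr (Sum.inl b), 1)))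
      + κ * (star (fun a => x (Sum.inl a, 1)) ⬝ᵥ (C1 *ᵥ fun b => x (Sum.inr (Sum.inl b), 2))) := by
  simp only [dotProduct, mulVec, kroneckerMap_apply, Fintype.sum_prod_type, Fintype.sum_sum_type,
    Fin.sum_univ_three, E1mat, Matrix.of_apply, Pi.star_apply, Matrix.cons_val', Matrix.cons_val_zero,
    Matrix.cons_val_one, Matrix.head_cons, Matrix.empty_val', Matrix.cons_val_fin_one,
    Matrix.head_fin_const, Matrix.cons_val_two, Matrix.tail_cons,
    zero_mul, mul_zero, add_zero, zero_add, Finset.sum_const_zero, Finset.mul_sum]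
  rw [Finset.sum_add_distrib]
  congr 1 <;>
    exact Finset.sum_congr rfl fun a _ => Finset.sum_congr rfl fun b _ => by ring

lemma quadE2 {k m n : ℕ} (C2 : Matrix (Fin m) (Fin n) ℂ) (ν μ : ℂ)
    (x : (Fin k ⊕ Fin m ⊕ Fin n) × Fin 3 → ℂ) :
    star x ⬝ᵥ ((E2mat k m n C2 ⊗ₖ !![0, ν, 0; 0, 0, μ; 0, 0, 0]) *ᵥ x) =
      ν * (star (fun a => x (Sum.inr (Sum.inl a), 0)) ⬝ᵥ (C2 *ᵥ fun b => x (Sum.inr (Sum.inr b), 1)))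
      + μ * (star (fun a => x (Sum.inr (Sum.inl a), 1)) ⬝ᵥ (C2 *ᵥ fun b => x (Sum.inr (Sum.inr b), 2))) := by
  simp only [dotProduct, mulVec, kroneckerMap_apply, Fintype.sum_prod_type, Fintype.sum_sum_type,
    Fin.sum_univ_three, E2mat, Matrix.of_apply, Pi.star_apply, Matrix.cons_val', Matrix.cons_val_zero,
    Matrix.cons_val_one, Matrix.head_cons, Matrix.empty_val', Matrix.cons_val_fin_one,
    Matrix.head_fin_const, Matrix.cons_val_two, Matrix.tail_cons,
    zero_mul, mul_zero, add_zero, zero_add, Finset.sum_const_zero, Finset.mul_sum]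
  rw [Finset.sum_add_distrib]
  congr 1 <;>
    exact Finset.sum_congr rfl fun a _ => Finset.sum_congr rfl fun b _ => by ring

lemma sqn_split {k m n : ℕ} (x : (Fin k ⊕ Fin m ⊕ Fin n) × Fin 3 → ℂ) :
    sqn x = sqn (fun a => x (Sum.inl a, 0)) + sqn (fun a => x (Sum.inl a, 1))
      + sqn (fun a => x (Sum.inl a, 2))
      + sqn (fun a => x (Sum.inr (Sum.inl a), 0)) + sqn (fun a => x (Sum.inr (Sum.inl a), 1))
      + sqn (fun a => x (Sum.inr (Sum.inl a), 2))
      + sqn (fun a => x (Sum.inr (Sum.inr a), 0)) + sqn (fun a => x (Sum.inr (Sum.inr a), 1))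
      + sqn (fun a => x (Sum.inr (Sum.inr a), 2)) := by
  simp only [sqn, Fintype.sum_prod_type, Fintype.sum_sum_type, Fin.sum_univ_three,
    Finset.sum_add_distrib]
  ring

/-- **Lemma.** If `(λ, μ) ∈ Θ`, `|κ| < 1` and `|ν| < 1`, then `T(κ,λ,μ,ν) ∈ 𝔓_E[3]`. -/
theorem Tmat_mem_PE {k m n : ℕ} (hk : 0 < k) (hm : 0 < m) (hn : 0 < n)
    (C1 : Matrix (Fin k) (Fin m) ℂ) (C2 : Matrix (Fin m) (Fin n) ℂ)
    (hC1 : C1 ≠ 0) (hC2 : C2 ≠ 0) (hnC1 : opNorm C1 = 1) (hnC2 : opNorm C2 = 1)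
    (κ lam μ ν : ℂ) (hlm : (lam, μ) ∈ Theta C1 C2)
    (hκ : ‖κ‖ < 1) (hν : ‖ν‖ < 1) :
    Tmat κ lam μ ν ∈ PE k m n C1 C2 3 := by
  rw [PE, Set.mem_setOf_eq, posDef_iff_dotProduct_mulVec]
  set Λ := LamE C1 C2 (Tmat κ lam μ ν).1 (Tmat κ lam μ ν).2 with hΛ
  constructor
  · show (1 - Λ - Λᴴ)ᴴ = 1 - Λ - Λᴴ
    rw [conjTranspose_sub, conjTranspose_sub, conjTranspose_one, conjTranspose_conjTranspose,
      sub_right_comm]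
  · intro x hx
    set s : ℂ := star x ⬝ᵥ (Λ *ᵥ x) with hs
    -- the quadratic form equals a real number
    have e1 : star x ⬝ᵥ ((1 - Λ - Λᴴ) *ᵥ x) = ((sqn x - 2 * s.re : ℝ) : ℂ) := by
      rw [sub_mulVec, sub_mulVec, one_mulVec, dotProduct_sub, dotProduct_sub, star_dot_self]
      have e2 : star x ⬝ᵥ (Λᴴ *ᵥ x) = star s := by
        rw [star_dot_mulVec, conjTranspose_conjTranspose, hs, star_dot_comm]
      rw [e2]
      apply Complex.ext <;>
        simp [Complex.sub_re, Complex.sub_im, Complex.ofReal_re, Complex.ofReal_im] <;>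
        try ring
    rw [e1, Complex.zero_lt_real]
    -- decompose s
    set uK : Fin 3 → Fin k → ℂ := fun i a => x (Sum.inl a, i) with huK
    set uM : Fin 3 → Fin m → ℂ := fun i a => x (Sum.inr (Sum.inl a), i) with huM
    set uN : Fin 3 → Fin n → ℂ := fun i a => x (Sum.inr (Sum.inr a), i) with huN
    have hsdec : s = lam * (star (uK 0) ⬝ᵥ (C1 *ᵥ uM 1)) + κ * (star (uK 1) ⬝ᵥ (C1 *ᵥ uM 2))
        + (ν * (star (uM 0) ⬝ᵥ (C2 *ᵥ uN 1)) + μ * (star (uM 1) ⬝ᵥ (C2 *ᵥ uN 2))) := by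
      rw [hs, hΛ, LamE, add_mulVec, dotProduct_add]
      rw [show (Tmat κ lam μ ν).1 = !![0, lam, 0; 0, 0, κ; 0, 0, 0] from rfl,
        show (Tmat κ lam μ ν).2 = !![0, ν, 0; 0, 0, μ; 0, 0, 0] from rfl]
      rw [quadE1, quadE2]
    -- abbreviations
    set a0 := sqn (uK 0); set a1 := sqn (uK 1); set a2 := sqn (uK 2)
    set b0 := sqn (uM 0); set b1 := sqn (uM 1); set b2 := sqn (uM 2)
    set c0 := sqn (uN 0); set c1 := sqn (uN 1); set c2 := sqn (uN 2)
    have hsqn : sqn x = a0 + a1 + a2 + b0 + b1 + b2 + c0 + c1 + c2 := sqn_split x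
    -- bounds for the κ and ν terms
    have hB2 : 2 * (κ * (star (uK 1) ⬝ᵥ (C1 *ᵥ uM 2))).re ≤ ‖κ‖ * (a1 + b2) := by
      refine le_trans (wdot κ _ _) ?_
      exact mul_le_mul_of_nonneg_left (add_le_add_right (sqn_mulVec_le C1 hnC1 (uM 2)) _)
        (norm_nonneg κ)
    have hB3 : 2 * (ν * (star (uM 0) ⬝ᵥ (C2 *ᵥ uN 1))).re ≤ ‖ν‖ * (b0 + c1) := by
      refine le_trans (wdot ν _ _) ?_
      exact mul_le_mul_of_nonneg_left (add_le_add_right (sqn_mulVec_le C2 hnC2 (uN 1)) _)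
        (norm_nonneg ν)
    -- bounds for the lam and μ terms
    have hB1 : 2 * (lam * (star (uK 0) ⬝ᵥ (C1 *ᵥ uM 1))).re
        ≤ a0 + Complex.normSq lam * sqn (C1 *ᵥ uM 1) := by
      have e : lam * (star (uK 0) ⬝ᵥ (C1 *ᵥ uM 1)) = star (uK 0) ⬝ᵥ (lam • (C1 *ᵥ uM 1)) := by
        rw [dotProduct_smul, smul_eq_mul]
      rw [e]
      refine le_trans (wdot1 _ _) ?_
      rw [sqn_smul]
    have hB4 : 2 * (μ * (star (uM 1) ⬝ᵥ (C2 *ᵥ uN 2))).re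
        ≤ Complex.normSq μ * sqn (C2ᴴ *ᵥ uM 1) + c2 := by
      have e : μ * (star (uM 1) ⬝ᵥ (C2 *ᵥ uN 2))
          = star ((starRingEnd ℂ) μ • (C2ᴴ *ᵥ uM 1)) ⬝ᵥ uN 2 := by
        rw [star_dot_mulVec, star_smul, smul_dotProduct, smul_eq_mul]
        simp
      rw [e]
      refine le_trans (wdot1 _ _) ?_
      rw [sqn_smul, Complex.normSq_conj]
    -- nonnegativity facts
    have h2re : 2 * s.re ≤ (a0 + Complex.normSq lam * sqn (C1 *ᵥ uM 1))
        + ‖κ‖ * (a1 + b2) + (‖ν‖ * (b0 + c1)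
        + (Complex.normSq μ * sqn (C2ᴴ *ᵥ uM 1) + c2)) := by
      rw [hsdec]
      simp only [Complex.add_re]
      linarith [hB1, hB2, hB3, hB4]
    -- it remains to prove the strict inequality
    have ha1b2 : 0 ≤ a1 + b2 := add_nonneg (sqn_nonneg _) (sqn_nonneg _)
    have hb0c1 : 0 ≤ b0 + c1 := add_nonneg (sqn_nonneg _) (sqn_nonneg _)
    have hκ2 : ‖κ‖ * (a1 + b2) ≤ a1 + b2 :=
      mul_le_of_le_one_left ha1b2 hκ.le
    have hν2 : ‖ν‖ * (b0 + c1) ≤ b0 + c1 :=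
      mul_le_of_le_one_left hb0c1 hν.le
    have hfinal : 2 * s.re < sqn x := by
      by_cases hv : uM 1 = 0
      · -- then the lam and μ terms vanish identically
        have hz1 : lam * (star (uK 0) ⬝ᵥ (C1 *ᵥ uM 1)) = 0 := by
          rw [hv]; simp
        have hz4 : μ * (star (uM 1) ⬝ᵥ (C2 *ᵥ uN 2)) = 0 := by
          rw [hv]; simp
        have h2re' : 2 * s.re ≤ ‖κ‖ * (a1 + b2) + ‖ν‖ * (b0 + c1) := by
          rw [hsdec, hz1, hz4]
          simp only [Complex.add_re, zero_add, add_zero]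
          linarith [hB2, hB3]
        rcases lt_or_eq_of_le ha1b2 with h1 | h1
        · have : ‖κ‖ * (a1 + b2) < a1 + b2 :=
            mul_lt_of_lt_one_left h1 hκ
          have h0 : 0 ≤ a0 := sqn_nonneg _
          have h2 : 0 ≤ a2 := sqn_nonneg _
          have h3 : 0 ≤ b1 := sqn_nonneg _
          have h4 : 0 ≤ c0 := sqn_nonneg _
          have h5 : 0 ≤ c2 := sqn_nonneg _
          linarith [hsqn, hν2, h2re']
        · rcases lt_or_eq_of_le hb0c1 with h2 | h2
          · have : ‖ν‖ * (b0 + c1) < b0 + c1 :=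
              mul_lt_of_lt_one_left h2 hν
            have h0 : 0 ≤ a0 := sqn_nonneg _
            have h3 : 0 ≤ a2 := sqn_nonneg _
            have h4 : 0 ≤ b1 := sqn_nonneg _
            have h5 : 0 ≤ c0 := sqn_nonneg _
            have h6 : 0 ≤ c2 := sqn_nonneg _
            linarith [hsqn, hκ2, h2re']
          · have hxpos : 0 < sqn x := sqn_pos hx
            rw [← h1, ← h2] at h2re'
            simp only [mul_zero, add_zero] at h2re'
            linarith
      · -- uM 1 ≠ 0 : use the Theta hypothesis
        have htheta : Complex.normSq lam * sqn (C1 *ᵥ uM 1)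
            + Complex.normSq μ * sqn (C2ᴴ *ᵥ uM 1) < b1 := by
          have hp := (show Matrix.PosDef _ from hlm).dotProduct_mulVec_pos hv
          have ecalc : star (uM 1) ⬝ᵥ
              (((1 : Matrix (Fin m) (Fin m) ℂ)
                - (((‖lam‖ : ℂ) ^ 2) • (C1ᴴ * C1)
                  + ((‖μ‖ : ℂ) ^ 2) • (C2 * C2ᴴ))) *ᵥ uM 1)
              = ((b1 - (Complex.normSq lam * sqn (C1 *ᵥ uM 1)
                  + Complex.normSq μ * sqn (C2ᴴ *ᵥ uM 1)) : ℝ) : ℂ) := by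
            rw [sub_mulVec, one_mulVec, dotProduct_sub, star_dot_self, add_mulVec,
              smul_mulVec, smul_mulVec, dotProduct_add, dotProduct_smul,
              dotProduct_smul, ← mulVec_mulVec, ← mulVec_mulVec]
            rw [star_dot_mulVec C1ᴴ, conjTranspose_conjTranspose, star_dot_self]
            rw [star_dot_mulVec C2, star_dot_self]
            rw [smul_eq_mul, smul_eq_mul, ← Complex.ofReal_pow, ← Complex.ofReal_pow,
              Complex.sq_norm, Complex.sq_norm]
            push_cast
            ring
          rw [ecalc] at hp
          rw [Complex.zero_lt_real] at hp
          linarith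
        have hsq1 : sqn (C1 *ᵥ uM 1) ≥ 0 := sqn_nonneg _
        have h0 : 0 ≤ a2 := sqn_nonneg _
        have h4 : 0 ≤ c0 := sqn_nonneg _
        linarith [h2re, hκ2, hν2, hsqn, htheta]
    rwa [sub_pos]
end

section
/- Suppose b, ℓ ∈ ℂ with |b| < 1. If the 2×2 matrix [[b, ℓ],[0, b]] has operator norm exactly one, then there is a real number θ such that ℓ = e^{iθ}(|b|² − 1). -/
open Matrix

lemma exists_max_sphere (f : EuclideanSpace ℂ (Fin 2) →L[ℂ] EuclideanSpace ℂ (Fin 2)) :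
    ∃ v : EuclideanSpace ℂ (Fin 2), ‖v‖ = 1 ∧ ‖f v‖ = ‖f‖ := by
  obtain ⟨v, hv, hmax⟩ := (isCompact_sphere (0 : EuclideanSpace ℂ (Fin 2)) 1).exists_isMaxOn
    (NormedSpace.sphere_nonempty.mpr zero_le_one)
    ((continuous_norm.comp f.continuous).continuousOn)
  have hv1 : ‖v‖ = 1 := mem_sphere_zero_iff_norm.mp hv
  refine ⟨v, hv1, le_antisymm (by simpa [hv1] using f.le_opNorm v) ?_⟩
  apply f.opNorm_le_bound (norm_nonneg _)
  intro x
  rcases eq_or_ne x 0 with rfl | hx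
  · simp
  · have hxn : (0:ℝ) < ‖x‖ := norm_pos_iff.mpr hx
    set c : ℂ := ((‖x‖ : ℝ) : ℂ)⁻¹ with hc
    have hw : (c • x) ∈ Metric.sphere (0 : EuclideanSpace ℂ (Fin 2)) 1 := by
      simp only [mem_sphere_zero_iff_norm, norm_smul, hc]
      rw [norm_inv, Complex.norm_real, Real.norm_eq_abs, abs_of_pos hxn]
      field_simp
    have h2 : ‖f (c • x)‖ ≤ ‖f v‖ := hmax hw
    rw [f.map_smul, norm_smul, hc, norm_inv, Complex.norm_real, Real.norm_eq_abs,
      abs_of_pos hxn] at h2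
    rw [inv_mul_le_iff₀ hxn] at h2
    rw [mul_comm]
    exact h2

lemma apply_norm_sq (b ℓ x y : ℂ) :
    ‖LinearMap.toContinuousLinearMap (Matrix.toEuclideanLin !![b, ℓ; 0, b])
      ((WithLp.equiv 2 (Fin 2 → ℂ)).symm ![x, y])‖ ^ 2
      = ‖b*x + ℓ*y‖ ^ 2 + (‖b‖ * ‖y‖) ^ 2 := by
  rw [LinearMap.coe_toContinuousLinearMap', WithLp.equiv_symm_apply, Matrix.toEuclideanLin_apply_piLp_toLp]
  rw [EuclideanSpace.norm_eq, Real.sq_sqrt (by positivity)]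
  simp [Matrix.mulVec, dotProduct, Fin.sum_univ_two, mul_comm]

lemma vec_norm_sq (x y : ℂ) :
    ‖((WithLp.equiv 2 (Fin 2 → ℂ)).symm ![x, y] : EuclideanSpace ℂ (Fin 2))‖ ^ 2
      = ‖x‖ ^ 2 + ‖y‖ ^ 2 := by
  rw [EuclideanSpace.norm_eq, Real.sq_sqrt (by positivity)]
  simp [Fin.sum_univ_two]

/-- **Lemma (Caratheodory, 2×2).** If `|b| < 1` and `[[b, ℓ],[0, b]]` has operator norm
exactly one, then `ℓ = e^{iθ}(|b|² − 1)` for some real `θ`. -/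
theorem norm_one_jordan_two (b ℓ : ℂ) (hb : ‖b‖ < 1)
    (h : opNorm !![b, ℓ; 0, b] = 1) :
    ∃ θ : ℝ, ℓ = Complex.exp (θ * Complex.I) * ((‖b‖ ^ 2 - 1 : ℝ) : ℂ) := by
  unfold opNorm at h
  have hf : ‖LinearMap.toContinuousLinearMap (Matrix.toEuclideanLin !![b, ℓ; 0, b])‖ = 1 := h
  set f := LinearMap.toContinuousLinearMap (Matrix.toEuclideanLin !![b, ℓ; 0, b]) with hfdef
  set r := ‖b‖ with hr
  set s := ‖ℓ‖ with hs
  have hr0 : 0 ≤ r := norm_nonneg b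
  have hs0 : 0 ≤ s := norm_nonneg ℓ
  have hu : 0 < 1 - r^2 := by nlinarith
  -- the basic inequality
  have hle : ∀ x y : ℂ, ‖b*x + ℓ*y‖ ^ 2 + (r * ‖y‖) ^ 2
      ≤ ‖x‖ ^ 2 + ‖y‖ ^ 2 := by
    intro x y
    have h1 := f.le_opNorm ((WithLp.equiv 2 (Fin 2 → ℂ)).symm ![x, y])
    rw [hf, one_mul] at h1
    have h2 := pow_le_pow_left₀ (norm_nonneg _) h1 2
    rwa [hfdef, apply_norm_sq, vec_norm_sq] at h2
  -- Step A : s ≤ 1 - r^2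
  have hsu : s ≤ 1 - r^2 := by
    by_contra hc
    push_neg at hc
    have hss : 0 < s := lt_trans hu hc
    have key := hle ((starRingEnd ℂ) b * ((s^2 : ℝ) : ℂ)) ((starRingEnd ℂ) ℓ * ((1 - r^2 : ℝ) : ℂ))
    have e1 : b * ((starRingEnd ℂ) b * ((s^2 : ℝ) : ℂ))
        + ℓ * ((starRingEnd ℂ) ℓ * ((1 - r^2 : ℝ) : ℂ)) = ((s^2 : ℝ) : ℂ) := by
      have hb2 : b * (starRingEnd ℂ) b = ((r^2 : ℝ) : ℂ) := by
        rw [Complex.mul_conj, Complex.normSq_eq_norm_sq]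
      have hl2 : ℓ * (starRingEnd ℂ) ℓ = ((s^2 : ℝ) : ℂ) := by
        rw [Complex.mul_conj, Complex.normSq_eq_norm_sq]
      calc b * ((starRingEnd ℂ) b * ((s^2 : ℝ) : ℂ))
            + ℓ * ((starRingEnd ℂ) ℓ * ((1 - r^2 : ℝ) : ℂ))
          = (b * (starRingEnd ℂ) b) * ((s^2 : ℝ) : ℂ)
            + (ℓ * (starRingEnd ℂ) ℓ) * ((1 - r^2 : ℝ) : ℂ) := by ring
        _ = ((s^2 : ℝ) : ℂ) := by rw [hb2, hl2]; push_cast; ring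
    rw [e1] at key
    have a1 : ‖((s^2 : ℝ) : ℂ)‖ = s^2 := by
      rw [Complex.norm_real, Real.norm_eq_abs, abs_of_nonneg (by positivity)]
    have a2 : ‖(starRingEnd ℂ) b * ((s^2 : ℝ) : ℂ)‖ = r * s^2 := by
      rw [norm_mul, Complex.norm_conj, Complex.norm_real, Real.norm_eq_abs, abs_of_nonneg (by positivity), hr]
    have a3 : ‖(starRingEnd ℂ) ℓ * ((1 - r^2 : ℝ) : ℂ)‖ = s * (1 - r^2) := by
      rw [norm_mul, Complex.norm_conj, Complex.norm_real, Real.norm_eq_abs, abs_of_nonneg (le_of_lt hu), hs]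
    rw [a1, a2, a3] at key
    have hd : 0 < s - (1 - r^2) := sub_pos.mpr hc
    have hpos : 0 < (1 - r^2) * (s * s) * ((s - (1 - r^2)) * (s + (1 - r^2))) :=
      mul_pos (mul_pos hu (mul_pos hss hss)) (mul_pos hd (by linarith))
    nlinarith [key, hpos]
  -- Step B : the norm is attained, giving s ≥ 1 - r^2
  obtain ⟨v, hv1, hvmax⟩ := exists_max_sphere f
  have hvrep : v = (WithLp.equiv 2 (Fin 2 → ℂ)).symm ![v 0, v 1] := by
    ext i; fin_cases i <;> rfl
  have heq : ‖b * v 0 + ℓ * v 1‖ ^ 2 + (r * ‖v 1‖) ^ 2 = 1 := by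
    have : ‖f v‖ ^ 2 = 1 := by rw [hvmax, hf]; norm_num
    rw [hvrep, hfdef, apply_norm_sq] at this
    exact this
  have hnv : ‖v 0‖ ^ 2 + ‖v 1‖ ^ 2 = 1 := by
    have : ‖v‖ ^ 2 = 1 := by rw [hv1]; norm_num
    rw [hvrep, vec_norm_sq] at this
    exact this
  have htri : ‖b * v 0 + ℓ * v 1‖ ≤ r * ‖v 0‖ + s * ‖v 1‖ := by
    calc ‖b * v 0 + ℓ * v 1‖
        ≤ ‖b * v 0‖ + ‖ℓ * v 1‖ := norm_add_le _ _
      _ = r * ‖v 0‖ + s * ‖v 1‖ := by rw [norm_mul, norm_mul]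
  have hus : 1 - r^2 ≤ s := by
    by_contra hc
    push_neg at hc
    set X := ‖v 0‖ with hX
    set Y := ‖v 1‖ with hY
    have hX0 : 0 ≤ X := norm_nonneg _
    have hY0 : 0 ≤ Y := norm_nonneg _
    have h1 : (r * X + s * Y) ^ 2 + (r * Y) ^ 2 ≥ 1 := by
      have habs0 : 0 ≤ ‖b * v 0 + ℓ * v 1‖ := norm_nonneg _
      nlinarith [heq, pow_le_pow_left₀ habs0 htri 2]
    clear hvrep htri heq hvmax hv1 hf hle h
    clear_value f
    clear hfdef f
    have hd2 : 0 < (1 - r^2)^2 - s^2 := by nlinarith [hc, hs0, hu]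
    have hq : X^2 + Y^2 - ((r*X + s*Y)^2 + (r*Y)^2) ≤ 0 := by linarith
    have h3 : (1 - r^2) * (X^2 + Y^2 - ((r*X + s*Y)^2 + (r*Y)^2)) ≤ 0 :=
      mul_nonpos_of_nonneg_of_nonpos hu.le hq
    have e : ((1 - r^2)*X - r*s*Y)^2 + ((1 - r^2)^2 - s^2)*Y^2 ≤ 0 := by linarith [h3, sq_nonneg Y]
    have hY2 : ((1 - r^2)^2 - s^2) * Y^2 ≤ 0 := by linarith [e, sq_nonneg ((1 - r^2)*X - r*s*Y)]
    have hY2' : Y^2 ≤ 0 := by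
      by_contra hp
      push_neg at hp
      nlinarith [mul_pos hd2 hp]
    have hYz : Y = 0 := by
      have : Y^2 = 0 := le_antisymm hY2' (sq_nonneg Y)
      exact pow_eq_zero_iff (by norm_num) |>.mp this
    have hXz : X = 0 := by
      rw [hYz] at e
      have hx2 : ((1 - r^2)*X)^2 ≤ 0 := by linarith [e]
      have : ((1 - r^2)*X)^2 = 0 := le_antisymm hx2 (sq_nonneg _)
      have h5 : (1 - r^2)*X = 0 := pow_eq_zero_iff (by norm_num) |>.mp this
      rcases mul_eq_zero.mp h5 with h6 | h6
      · linarith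
      · exact h6
    rw [hXz, hYz] at hnv
    norm_num at hnv
  have hseq : s = 1 - r^2 := le_antisymm hsu hus
  -- conclude
  have hl0 : ℓ ≠ 0 := by
    intro h0
    have hz : s = 0 := by simp [hs, h0]
    linarith [hz, hseq, hu]
  refine ⟨(-ℓ).arg, ?_⟩
  have habs : ‖-ℓ‖ = s := by rw [norm_neg]
  have hexp := Complex.norm_mul_exp_arg_mul_I (-ℓ)
  rw [habs] at hexp
  have hcoe : ((‖b‖ ^ 2 - 1 : ℝ) : ℂ) = -((s : ℝ) : ℂ) := by
    rw [hseq, ← hr]; push_cast; ring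
  rw [hcoe]
  have : Complex.exp ((-ℓ).arg * Complex.I) * -((s : ℝ) : ℂ)
      = -(((s : ℝ) : ℂ) * Complex.exp ((-ℓ).arg * Complex.I)) := by ring
  rw [this, hexp]
  ring
end

section
/- Suppose α, β, b ∈ ℂ with |b| < 1, θ ∈ ℝ, and set e = e^{iθ}(|b|² − 1). If R = [[b, α, β],[0, b, e],[0, 0, b]] ∈ M₃(ℂ) is a contraction (operator norm at most one), then ‖R‖ = 1 and β = α e^{iθ} conj(b). Similarly, if R = [[b, e, β],[0, b, α],[0, 0, b]] is a contraction, then ‖R‖ = 1 and β = α e^{iθ} conj(b). -/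
open Matrix

noncomputable def evC (x : Fin 3 → ℂ) : EuclideanSpace ℂ (Fin 3) := (WithLp.equiv 2 _).symm x

lemma evC_norm (x : Fin 3 → ℂ) :
    ‖evC x‖ = Real.sqrt (‖x 0‖^2 + ‖x 1‖^2 + ‖x 2‖^2) := by
  rw [EuclideanSpace.norm_eq]
  simp [evC, Fin.sum_univ_three]

lemma applyLeC (A : Matrix (Fin 3) (Fin 3) ℂ) (h : opNorm A ≤ 1) (x : Fin 3 → ℂ) :
    ‖evC (A.mulVec x)‖ ≤ ‖evC x‖ := by
  have h1 := (LinearMap.toContinuousLinearMap (Matrix.toEuclideanLin A)).le_opNorm (evC x)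
  rw [LinearMap.coe_toContinuousLinearMap'] at h1
  rw [show evC x = (WithLp.equiv 2 _).symm x from rfl, show (toEuclideanLin A) ((WithLp.equiv 2 (Fin 3 → ℂ)).symm x) = evC (A *ᵥ x) from rfl] at h1
  calc ‖evC (A.mulVec x)‖ ≤ opNorm A * ‖evC x‖ := h1
    _ ≤ 1 * ‖evC x‖ := by gcongr
    _ = ‖evC x‖ := one_mul _

lemma oneLeOpC (A : Matrix (Fin 3) (Fin 3) ℂ) (x : Fin 3 → ℂ)
    (hn : ‖evC (A.mulVec x)‖ = ‖evC x‖) (hx : ‖evC x‖ ≠ 0) : 1 ≤ opNorm A := by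
  have h1 := (LinearMap.toContinuousLinearMap (Matrix.toEuclideanLin A)).le_opNorm (evC x)
  rw [LinearMap.coe_toContinuousLinearMap'] at h1
  rw [show evC x = (WithLp.equiv 2 _).symm x from rfl, show (toEuclideanLin A) ((WithLp.equiv 2 (Fin 3 → ℂ)).symm x) = evC (A *ᵥ x) from rfl] at h1
  change ‖evC (A.mulVec x)‖ ≤ opNorm A * ‖evC x‖ at h1
  rw [hn] at h1
  have : (0:ℝ) < ‖evC x‖ := lt_of_le_of_ne (norm_nonneg _) (Ne.symm hx)
  nlinarith [this]

/-- **Lemma (constraints).** Let `|b| < 1` and `e = e^{iθ}(|b|² − 1)`. If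
`R = [[b,α,β],[0,b,e],[0,0,b]]` is a contraction, then `‖R‖ = 1` and
`β = α e^{iθ} conj(b)`; similarly for `R = [[b,e,β],[0,b,α],[0,0,b]]`. -/
theorem contraction_constraints (α β b : ℂ) (hb : ‖b‖ < 1) (θ : ℝ) (e : ℂ)
    (he : e = Complex.exp ((θ : ℂ) * Complex.I) * ((‖b‖ ^ 2 - 1 : ℝ) : ℂ)) :
    (opNorm !![b, α, β; 0, b, e; 0, 0, b] ≤ 1 →
      opNorm !![b, α, β; 0, b, e; 0, 0, b] = 1 ∧
      β = α * (Complex.exp ((θ : ℂ) * Complex.I) * starRingEnd ℂ b)) ∧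
    (opNorm !![b, e, β; 0, b, α; 0, 0, b] ≤ 1 →
      opNorm !![b, e, β; 0, b, α; 0, 0, b] = 1 ∧
      β = α * (Complex.exp ((θ : ℂ) * Complex.I) * starRingEnd ℂ b)) := by
  set ω := Complex.exp ((θ : ℂ) * Complex.I) with hωdef
  set r := ‖b‖ with hrdef
  have hω : ‖ω‖ = 1 := Complex.norm_exp_ofReal_mul_I θ
  have hωn : Complex.normSq ω = 1 := by
    rw [← Complex.sq_norm, hω]; norm_num
  have hωc : ω * (starRingEnd ℂ) ω = 1 := by
    rw [Complex.mul_conj, hωn]; norm_num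
  have hbb : b * (starRingEnd ℂ) b = ((r:ℂ))^2 := by
    rw [Complex.mul_conj, ← Complex.sq_norm]; push_cast; ring
  have hnω : ‖ω‖ = 1 := by rw [hω]
  have hnb : ‖b‖ = r := by rw [hrdef]
  have hnωb : ‖-ω * (starRingEnd ℂ) b‖ = r := by
    rw [norm_mul, norm_neg, hnω, RCLike.norm_conj, hnb, one_mul]
  have sqrt_mono : ∀ s t : ℝ, 0 ≤ t → Real.sqrt s ≤ Real.sqrt t → s ≤ t := by
    intro s t ht hst
    by_contra hc
    push_neg at hc
    have := Real.sqrt_lt_sqrt ht hc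
    linarith
  constructor
  · -- first matrix
    intro h
    have hmv : (!![b, α, β; 0, b, e; 0, 0, b]).mulVec ![0, -ω * (starRingEnd ℂ) b, 1]
        = ![α * (-ω * (starRingEnd ℂ) b) + β, -ω, b] := by
      funext i
      fin_cases i <;>
        simp [Matrix.mulVec, dotProduct, Fin.sum_univ_three, he] <;>
        push_cast <;> linear_combination (-ω) * hbb
    have hv := applyLeC _ h ![0, -ω * (starRingEnd ℂ) b, 1]
    rw [hmv, evC_norm, evC_norm] at hv
    simp only [Matrix.cons_val_zero, Matrix.cons_val_one, Matrix.head_cons,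
      Matrix.cons_val_two, Matrix.tail_cons] at hv
    rw [hnωb, norm_neg, hnω, hnb] at hv
    simp only [norm_zero, norm_one] at hv
    have hv2 : ‖α * (-ω * (starRingEnd ℂ) b) + β‖^2 + 1^2 + r^2 ≤ 0^2 + r^2 + 1^2 :=
      sqrt_mono _ _ (by positivity) hv
    have hz : ‖α * (-ω * (starRingEnd ℂ) b) + β‖ = 0 := by nlinarith [norm_nonneg (α * (-ω * (starRingEnd ℂ) b) + β)]
    rw [norm_eq_zero] at hz
    have hβ : β = α * (ω * (starRingEnd ℂ) b) := by linear_combination hz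
    refine ⟨le_antisymm h ?_, hβ⟩
    apply oneLeOpC _ ![0, -ω * (starRingEnd ℂ) b, 1]
    · rw [hmv, evC_norm, evC_norm]
      simp only [Matrix.cons_val_zero, Matrix.cons_val_one, Matrix.head_cons,
        Matrix.cons_val_two, Matrix.tail_cons]
      rw [hnωb, norm_neg, hnω, hnb]
      have : α * (-ω * (starRingEnd ℂ) b) + β = 0 := by rw [hβ]; ring
      rw [this]
      simp only [norm_zero, norm_one]
      ring_nf
    · rw [evC_norm]
      simp only [Matrix.cons_val_zero, Matrix.cons_val_one, Matrix.head_cons,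
        Matrix.cons_val_two, Matrix.tail_cons]
      rw [hnωb]
      simp only [norm_zero, norm_one]
      positivity
  · -- second matrix
    intro h
    set c := b * (starRingEnd ℂ) α - ω * (starRingEnd ℂ) β with hcdef
    have sq_eq : ∀ w : ℂ, ‖w‖^2 = Complex.normSq w := fun w => by
      rw [Complex.sq_norm]
    have key : ∀ z : ℂ, 2 * (c * (starRingEnd ℂ) z).re ≤
        Complex.normSq z * (1 - Complex.normSq α - Complex.normSq β - Complex.normSq b) := by
      intro z
      have hmv : (!![b, e, β; 0, b, α; 0, 0, b]).mulVec ![-ω * (starRingEnd ℂ) b, 1, z]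
          = ![-ω + β * z, b + α * z, b * z] := by
        funext i
        fin_cases i <;>
          simp [Matrix.mulVec, dotProduct, Fin.sum_univ_three, he] <;>
          push_cast <;> linear_combination (-ω) * hbb
      have hv := applyLeC _ h ![-ω * (starRingEnd ℂ) b, 1, z]
      rw [hmv, evC_norm, evC_norm] at hv
      simp only [Matrix.cons_val_zero, Matrix.cons_val_one, Matrix.head_cons,
        Matrix.cons_val_two, Matrix.tail_cons] at hv
      have hv2 := sqrt_mono _ _ (by positivity) hv
      rw [sq_eq, sq_eq, sq_eq, sq_eq, sq_eq, sq_eq] at hv2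
      rw [Complex.normSq_add, Complex.normSq_add, Complex.normSq_mul,
        Complex.normSq_mul, Complex.normSq_mul, Complex.normSq_mul] at hv2
      simp only [Complex.normSq_neg, Complex.normSq_conj, Complex.normSq_one] at hv2
      rw [hωn] at hv2
      have hsplit : (c * (starRingEnd ℂ) z) = b * (starRingEnd ℂ) (α * z) + (-ω) * (starRingEnd ℂ) (β * z) := by
        rw [_root_.map_mul, _root_.map_mul, hcdef]; ring
      rw [hsplit, Complex.add_re]
      have hns : Complex.normSq b = r^2 := by rw [← Complex.sq_norm]
      nlinarith [hv2]
    -- derive c = 0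
    set C := 1 - Complex.normSq α - Complex.normSq β - Complex.normSq b with hCdef
    have hc0 : Complex.normSq c = 0 := by
      by_contra hc
      have hcpos : 0 < Complex.normSq c := lt_of_le_of_ne (Complex.normSq_nonneg c) (Ne.symm hc)
      set t : ℝ := 1 / (|C| + 1) with htdef
      have ht : 0 < t := by positivity
      have htC : t * C < 1 := by
        have h1 : t * C ≤ t * |C| := by
          apply mul_le_mul_of_nonneg_left (le_abs_self C) ht.le
        have h2 : t * |C| < 1 := by
          rw [htdef, div_mul_eq_mul_div, one_mul, div_lt_one (by positivity)]
          linarith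
        linarith
      have hk := key ((t:ℂ) * c)
      rw [_root_.map_mul, Complex.conj_ofReal] at hk
      have h1 : (c * ((t:ℂ) * (starRingEnd ℂ) c)).re = t * Complex.normSq c := by
        rw [show c * ((t:ℂ) * (starRingEnd ℂ) c) = (t:ℂ) * (c * (starRingEnd ℂ) c) by ring,
          Complex.mul_conj]
        simp [Complex.ofReal_mul]
      have h2 : Complex.normSq ((t:ℂ) * c) = t^2 * Complex.normSq c := by
        rw [Complex.normSq_mul, Complex.normSq_ofReal]; ring
      rw [h1, h2] at hk
      nlinarith [mul_pos ht hcpos]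
    rw [Complex.normSq_eq_zero] at hc0
    have hβ : β = α * (ω * (starRingEnd ℂ) b) := by
      have hc1 : b * (starRingEnd ℂ) α = ω * (starRingEnd ℂ) β := by
        rw [hcdef] at hc0; linear_combination hc0
      have hc2 := congrArg (starRingEnd ℂ) hc1
      simp only [_root_.map_mul, Complex.conj_conj] at hc2
      linear_combination (-ω) * hc2 - β * hωc
    refine ⟨le_antisymm h ?_, hβ⟩
    have hmv : (!![b, e, β; 0, b, α; 0, 0, b]).mulVec ![-ω * (starRingEnd ℂ) b, 1, 0]
        = ![-ω, b, 0] := by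
      funext i
      fin_cases i <;>
        simp [Matrix.mulVec, dotProduct, Fin.sum_univ_three, he] <;>
        push_cast <;> linear_combination (-ω) * hbb
    apply oneLeOpC _ ![-ω * (starRingEnd ℂ) b, 1, 0]
    · rw [hmv, evC_norm, evC_norm]
      simp only [Matrix.cons_val_zero, Matrix.cons_val_one, Matrix.head_cons,
        Matrix.cons_val_two, Matrix.tail_cons]
      rw [hnωb, norm_neg, hnω, hnb]
      simp only [norm_zero, norm_one]
      ring_nf
    · rw [evC_norm]
      simp only [Matrix.cons_val_zero, Matrix.cons_val_one, Matrix.head_cons,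
        Matrix.cons_val_two, Matrix.tail_cons]
      rw [hnωb]
      simp only [norm_zero, norm_one]
      positivity
end

section
/- Suppose b ∈ ℂ with |b| < 1, θ ∈ ℝ, and 0 < λ < 1. Set e = e^{iθ}(|b|² − 1) and f = e^{iθ} conj(b) e, and let X = [[b, λe, λf],[0, b, e],[0, 0, b]] and Y = [[b, e, λf],[0, b, λe],[0, 0, b]] in M₃(ℂ). Then for each P among X*X, XX*, Y*Y and YY*, there is a two-dimensional complex subspace N ⊆ ℂ³ such that ⟨P v, v⟩ ≥ λ² ‖v‖² for every v ∈ N; moreover, if b ≠ 0, then ⟨P v, v⟩ > λ² ‖v‖² for every nonzero v ∈ N. -/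
open Matrix

lemma keyIneq (r lam X2 Y2 T E : ℝ) (hr0 : 0 ≤ r) (hl0 : 0 < lam) (hl1 : lam < 1)
    (hX2 : 0 ≤ X2) (hY2 : 0 ≤ Y2) (hE : 0 ≤ E) (hT : 2 * T ≤ r * X2 + Y2) :
    lam ^ 2 * ((1 + r) * (X2 + Y2) - 2 * T) ≤
      ((lam + r * (1 - lam)) ^ 2 + r + E) * X2 + (1 + r) * Y2 - 2 * T := by
  nlinarith [mul_nonneg (mul_nonneg hE hX2) (le_of_lt hl0),
    mul_nonneg hE hX2,
    mul_nonneg (mul_nonneg hr0 (by linarith : (0:ℝ) ≤ 1 - lam)) hX2,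
    mul_nonneg (by nlinarith : (0:ℝ) ≤ 1 - lam ^ 2) (by linarith : 0 ≤ r * X2 + Y2 - 2 * T),
    mul_nonneg (mul_nonneg hr0 (by nlinarith : (0:ℝ) ≤ 1 - lam ^ 2)) hY2,
    mul_nonneg (mul_nonneg (mul_nonneg hr0 (by linarith : (0:ℝ) ≤ 1 - lam))
      (by nlinarith : (0:ℝ) ≤ (lam + r * (1 - lam)) + lam)) hX2]

lemma keyIneqStrict (r lam X2 Y2 T E : ℝ) (hr0 : 0 < r) (hl0 : 0 < lam) (hl1 : lam < 1)
    (hX2 : 0 ≤ X2) (hY2 : 0 ≤ Y2) (hE : 0 ≤ E) (hT : 2 * T ≤ r * X2 + Y2)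
    (hxy : 0 < X2 ∨ 0 < Y2) :
    lam ^ 2 * ((1 + r) * (X2 + Y2) - 2 * T) <
      ((lam + r * (1 - lam)) ^ 2 + r + E) * X2 + (1 + r) * Y2 - 2 * T := by
  rcases hxy with hx | hy
  · nlinarith [mul_nonneg hE hX2,
      mul_nonneg (by nlinarith : (0:ℝ) ≤ 1 - lam ^ 2) (by linarith : 0 ≤ r * X2 + Y2 - 2 * T),
      mul_nonneg (mul_nonneg hr0.le (by nlinarith : (0:ℝ) ≤ 1 - lam ^ 2)) hY2,
      mul_pos (mul_pos (mul_pos hr0 (by linarith : (0:ℝ) < 1 - lam))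
        (by nlinarith : (0:ℝ) < (lam + r * (1 - lam)) + lam)) hx]
  · rcases le_or_gt X2 0 with hx0 | hx0
    · have hX2' : X2 = 0 := le_antisymm hx0 hX2
      subst hX2'
      nlinarith [mul_nonneg (by nlinarith : (0:ℝ) ≤ 1 - lam ^ 2)
          (by linarith : 0 ≤ r * 0 + Y2 - 2 * T),
        mul_pos (mul_pos hr0 (by nlinarith : (0:ℝ) < 1 - lam ^ 2)) hy]
    · nlinarith [mul_nonneg hE hX2,
        mul_nonneg (by nlinarith : (0:ℝ) ≤ 1 - lam ^ 2) (by linarith : 0 ≤ r * X2 + Y2 - 2 * T),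
        mul_nonneg (mul_nonneg hr0.le (by nlinarith : (0:ℝ) ≤ 1 - lam ^ 2)) hY2,
        mul_pos (mul_pos (mul_pos hr0 (by linarith : (0:ℝ) < 1 - lam))
          (by nlinarith : (0:ℝ) < (lam + r * (1 - lam)) + lam)) hx0]

lemma Tbound (b w x y : ℂ) (hw : ‖w‖ = 1) :
    2 * ((starRingEnd ℂ) x * (starRingEnd ℂ) b * w * y).re ≤
      ‖b‖ ^ 2 * ‖x‖ ^ 2 + ‖y‖ ^ 2 := by
  have h1 : ((starRingEnd ℂ) x * (starRingEnd ℂ) b * w * y).re ≤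
      ‖b‖ * ‖x‖ * ‖y‖ := by
    calc _ ≤ ‖(starRingEnd ℂ) x * (starRingEnd ℂ) b * w * y‖ := Complex.re_le_norm _
    _ = ‖b‖ * ‖x‖ * ‖y‖ := by
        rw [norm_mul, norm_mul, norm_mul, Complex.norm_conj, Complex.norm_conj, hw]
        ring
  nlinarith [sq_nonneg (‖b‖ * ‖x‖ - ‖y‖),
    norm_nonneg x, norm_nonneg y, norm_nonneg b]

lemma quadCT (A : Matrix (Fin 3) (Fin 3) ℂ) (v : Fin 3 → ℂ) :
    star v ⬝ᵥ (Aᴴ * A) *ᵥ v = star (A *ᵥ v) ⬝ᵥ (A *ᵥ v) := by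
  rw [← Matrix.mulVec_mulVec, dotProduct_mulVec, ← Matrix.star_mulVec]

lemma quadCT' (A : Matrix (Fin 3) (Fin 3) ℂ) (v : Fin 3 → ℂ) :
    star v ⬝ᵥ (A * Aᴴ) *ᵥ v = star (Aᴴ *ᵥ v) ⬝ᵥ (Aᴴ *ᵥ v) := by
  rw [← quadCT Aᴴ v, Matrix.conjTranspose_conjTranspose]

lemma abssq (z : ℂ) : ((‖z‖ : ℝ) : ℂ) ^ 2 = z * (starRingEnd ℂ) z := by
  rw [Complex.mul_conj, Complex.normSq_eq_norm_sq]; push_cast; ring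

lemma sumAbsSq (v : Fin 3 → ℂ) :
    (∑ i, ‖v i‖ ^ 2) = (star v ⬝ᵥ v).re := by
  have h : ∀ z : ℂ, ((starRingEnd ℂ) z * z).re = ‖z‖ ^ 2 := by
    intro z
    rw [← Complex.normSq_eq_conj_mul_self, Complex.ofReal_re, Complex.sq_norm]
  simp only [dotProduct, Fin.sum_univ_three, Pi.star_apply, RCLike.star_def,
    Complex.add_re, h]

lemma aux_subspace (P : Matrix (Fin 3) (Fin 3) ℂ) (bne : Prop) (lam : ℝ)
    (u₁ u₂ : Fin 3 → ℂ)
    (hli : LinearIndependent ℂ ![u₁, u₂])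
    (hQ : ∀ x y : ℂ, lam ^ 2 * ∑ i, ‖(x • u₁ + y • u₂) i‖ ^ 2 ≤
        (star (x • u₁ + y • u₂) ⬝ᵥ P *ᵥ (x • u₁ + y • u₂)).re)
    (hQs : bne → ∀ x y : ℂ, ¬(x = 0 ∧ y = 0) →
        lam ^ 2 * ∑ i, ‖(x • u₁ + y • u₂) i‖ ^ 2 <
        (star (x • u₁ + y • u₂) ⬝ᵥ P *ᵥ (x • u₁ + y • u₂)).re) :
    ∃ Nsub : Submodule ℂ (Fin 3 → ℂ), Module.finrank ℂ Nsub = 2 ∧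
      (∀ v ∈ Nsub, lam ^ 2 * ∑ i, ‖v i‖ ^ 2 ≤ (star v ⬝ᵥ P *ᵥ v).re) ∧
      (bne → ∀ v ∈ Nsub, v ≠ 0 →
        lam ^ 2 * ∑ i, ‖v i‖ ^ 2 < (star v ⬝ᵥ P *ᵥ v).re) := by
  refine ⟨Submodule.span ℂ {u₁, u₂}, ?_, ?_, ?_⟩
  · have h2 : Set.range ![u₁, u₂] = {u₁, u₂} := by
      simp [Matrix.range_cons, Matrix.range_empty, Set.pair_comm]
    have := finrank_span_eq_card hli
    rw [h2] at this
    simpa using this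
  · intro v hv
    obtain ⟨x, y, rfl⟩ := Submodule.mem_span_pair.1 hv
    exact hQ x y
  · intro hb v hv hv0
    obtain ⟨x, y, rfl⟩ := Submodule.mem_span_pair.1 hv
    refine hQs hb x y ?_
    rintro ⟨rfl, rfl⟩
    simp at hv0

lemma core (P : Matrix (Fin 3) (Fin 3) ℂ) (bne : Prop) (bp wp : ℂ) (lam r E : ℝ)
    (hl0 : 0 < lam) (hl1 : lam < 1) (hE : 0 ≤ E)
    (hr : r = ‖bp‖ ^ 2) (habsw : ‖wp‖ = 1)
    (hbne : bne → 0 < r)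
    (u₁ u₂ : Fin 3 → ℂ) (hli : LinearIndependent ℂ ![u₁, u₂])
    (hq : ∀ x y : ℂ, (star (x • u₁ + y • u₂) ⬝ᵥ P *ᵥ (x • u₁ + y • u₂)).re =
        ((lam + r * (1 - lam)) ^ 2 + r + E) * ‖x‖ ^ 2 + (1 + r) * ‖y‖ ^ 2
        - 2 * ((starRingEnd ℂ) x * (starRingEnd ℂ) bp * wp * y).re)
    (hn : ∀ x y : ℂ, (∑ i, ‖(x • u₁ + y • u₂) i‖ ^ 2) =
        (1 + r) * (‖x‖ ^ 2 + ‖y‖ ^ 2)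
        - 2 * ((starRingEnd ℂ) x * (starRingEnd ℂ) bp * wp * y).re) :
    ∃ Nsub : Submodule ℂ (Fin 3 → ℂ), Module.finrank ℂ Nsub = 2 ∧
      (∀ v ∈ Nsub, lam ^ 2 * ∑ i, ‖v i‖ ^ 2 ≤ (star v ⬝ᵥ P *ᵥ v).re) ∧
      (bne → ∀ v ∈ Nsub, v ≠ 0 →
        lam ^ 2 * ∑ i, ‖v i‖ ^ 2 < (star v ⬝ᵥ P *ᵥ v).re) := by
  have hr0 : 0 ≤ r := hr ▸ sq_nonneg _
  refine aux_subspace P bne lam u₁ u₂ hli ?_ ?_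
  · intro x y
    rw [hq, hn]
    refine keyIneq r lam _ _ _ E hr0 hl0 hl1 (sq_nonneg _) (sq_nonneg _) hE ?_
    rw [hr]; exact Tbound bp wp x y habsw
  · intro hb x y hxy
    rw [hq, hn]
    refine keyIneqStrict r lam _ _ _ E (hbne hb) hl0 hl1 (sq_nonneg _) (sq_nonneg _) hE ?_ ?_
    · rw [hr]; exact Tbound bp wp x y habsw
    · rcases not_and_or.mp hxy with hx | hy
      · exact Or.inl (pow_pos (norm_pos_iff.mpr hx) 2)
      · exact Or.inr (pow_pos (norm_pos_iff.mpr hy) 2)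

set_option maxHeartbeats 2000000 in
/-- **Lemma (lower bound).** Let `|b| < 1`, `0 < λ < 1`, `e = e^{iθ}(|b|² − 1)`,
`f = e^{iθ} conj(b) e`, `X = [[b,λe,λf],[0,b,e],[0,0,b]]` and
`Y = [[b,e,λf],[0,b,λe],[0,0,b]]`. For each `P` among `X*X`, `XX*`, `Y*Y`, `YY*` there is
a two-dimensional subspace `N ⊆ ℂ³` on which `⟨Pv, v⟩ ≥ λ²‖v‖²`; if moreover `b ≠ 0`,
then `⟨Pv, v⟩ > λ²‖v‖²` for every nonzero `v ∈ N`. -/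
theorem compression_bound (b : ℂ) (hb : ‖b‖ < 1) (θ lam : ℝ)
    (hlam0 : 0 < lam) (hlam1 : lam < 1) (e f : ℂ)
    (he : e = Complex.exp ((θ : ℂ) * Complex.I) * ((‖b‖ ^ 2 - 1 : ℝ) : ℂ))
    (hf : f = Complex.exp ((θ : ℂ) * Complex.I) * starRingEnd ℂ b * e)
    (X Y : Matrix (Fin 3) (Fin 3) ℂ)
    (hX : X = !![b, (lam : ℂ) * e, (lam : ℂ) * f; 0, b, e; 0, 0, b])
    (hY : Y = !![b, e, (lam : ℂ) * f; 0, b, (lam : ℂ) * e; 0, 0, b]) :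
    ∀ P ∈ ({Xᴴ * X, X * Xᴴ, Yᴴ * Y, Y * Yᴴ} : Set (Matrix (Fin 3) (Fin 3) ℂ)),
      ∃ Nsub : Submodule ℂ (Fin 3 → ℂ), Module.finrank ℂ Nsub = 2 ∧
        (∀ v ∈ Nsub, lam ^ 2 * ∑ i, ‖v i‖ ^ 2 ≤ (star v ⬝ᵥ P *ᵥ v).re) ∧
        (b ≠ 0 → ∀ v ∈ Nsub, v ≠ 0 →
          lam ^ 2 * ∑ i, ‖v i‖ ^ 2 < (star v ⬝ᵥ P *ᵥ v).re) := by
  intro P hP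
  set w := Complex.exp ((θ : ℂ) * Complex.I) with hwdef
  have hwne : w ≠ 0 := Complex.exp_ne_zero _
  have habsw : ‖w‖ = 1 := Complex.norm_exp_ofReal_mul_I θ
  have habsw' : ‖(starRingEnd ℂ) w‖ = 1 := by rw [Complex.norm_conj]; exact habsw
  have hnsq : Complex.normSq w = 1 := by rw [Complex.normSq_eq_norm_sq, habsw]; norm_num
  have hcw : (starRingEnd ℂ) w = w⁻¹ := by
    field_simp
    rw [← Complex.normSq_eq_conj_mul_self, hnsq, Complex.ofReal_one]
  have hbne : b ≠ 0 → 0 < ‖b‖ ^ 2 := fun h => pow_pos (norm_pos_iff.mpr h) 2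
  have hrb' : (‖b‖ ^ 2 : ℝ) = ‖(starRingEnd ℂ) b‖ ^ 2 := by
    rw [Complex.norm_conj]
  have hG : (0:ℝ) ≤ ‖b‖ ^ 2 * (1 - ‖b‖ ^ 2) ^ 2 * (1 - lam) ^ 2 := by
    positivity
  simp only [Set.mem_insert_iff, Set.mem_singleton_iff] at hP
  rcases hP with rfl | rfl | rfl | rfl
  · -- P = Xᴴ * X
    refine core (Xᴴ * X) (b ≠ 0) b w lam (‖b‖ ^ 2) 0 hlam0 hlam1 le_rfl rfl habsw hbne
      ![-(starRingEnd ℂ b * w), 1, 0] ![0, -(starRingEnd ℂ b * w), 1] ?_ ?_ ?_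
    · refine LinearIndependent.pair_iff.mpr fun s t hst => ?_
      have h1 := congrFun hst 1
      have h2 := congrFun hst 2
      simp at h1 h2
      subst h2; simp at h1; exact ⟨h1, rfl⟩
    · intro x y
      have hC : star (x • ![-(starRingEnd ℂ b * w), 1, 0] + y • ![0, -(starRingEnd ℂ b * w), 1])
          ⬝ᵥ (Xᴴ * X) *ᵥ (x • ![-(starRingEnd ℂ b * w), 1, 0] + y • ![0, -(starRingEnd ℂ b * w), 1])
          = ((((lam + ‖b‖ ^ 2 * (1 - lam)) ^ 2 + ‖b‖ ^ 2 + 0)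
              * ‖x‖ ^ 2 + (1 + ‖b‖ ^ 2) * ‖y‖ ^ 2 : ℝ) : ℂ)
            - ((starRingEnd ℂ) x * (starRingEnd ℂ) b * w * y
              + starRingEnd ℂ ((starRingEnd ℂ) x * (starRingEnd ℂ) b * w * y)) := by
        rw [quadCT]
        subst hX he hf
        simp [Matrix.mulVec, dotProduct, Fin.sum_univ_three, Pi.add_apply, Pi.smul_apply,
          smul_eq_mul, Pi.star_apply, Matrix.of_apply, Matrix.cons_val_succ, Matrix.cons_val_zero,
          Matrix.cons_val_one, Matrix.head_cons, RCLike.star_def, _root_.map_mul, map_add, map_neg,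
          _root_.map_one, _root_.map_zero, Complex.conj_conj, Complex.conj_ofReal, Matrix.vecHead,
          Matrix.vecTail, Function.comp, hcw]
        push_cast
        rw [abssq b, abssq x, abssq y]
        field_simp
        ring
      rw [hC, Complex.sub_re, Complex.add_re, Complex.conj_re, Complex.ofReal_re]
      ring
    · intro x y
      rw [sumAbsSq]
      have hC : star (x • ![-(starRingEnd ℂ b * w), 1, 0] + y • ![0, -(starRingEnd ℂ b * w), 1])
          ⬝ᵥ (x • ![-(starRingEnd ℂ b * w), 1, 0] + y • ![0, -(starRingEnd ℂ b * w), 1])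
          = (((1 + ‖b‖ ^ 2) * (‖x‖ ^ 2 + ‖y‖ ^ 2) : ℝ) : ℂ)
            - ((starRingEnd ℂ) x * (starRingEnd ℂ) b * w * y
              + starRingEnd ℂ ((starRingEnd ℂ) x * (starRingEnd ℂ) b * w * y)) := by
        simp [dotProduct, Fin.sum_univ_three, Pi.add_apply, Pi.smul_apply,
          smul_eq_mul, Pi.star_apply, RCLike.star_def, _root_.map_mul, map_add, map_neg,
          _root_.map_one, _root_.map_zero, Complex.conj_conj, Complex.conj_ofReal, hcw]
        push_cast
        rw [abssq b, abssq x, abssq y]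
        field_simp
        ring
      rw [hC, Complex.sub_re, Complex.add_re, Complex.conj_re, Complex.ofReal_re]
      ring
  · -- P = X * Xᴴ
    refine core (X * Xᴴ) (b ≠ 0) (b) (w) lam (‖b‖ ^ 2)
      (‖b‖ ^ 2 * (1 - ‖b‖ ^ 2) ^ 2 * (1 - lam) ^ 2) hlam0 hlam1 ?_ (rfl) (habsw) hbne
      ![1, -(b * starRingEnd ℂ w), 0] ![0, 1, -(b * starRingEnd ℂ w)] ?_ ?_ ?_
    · positivity
    · refine LinearIndependent.pair_iff.mpr fun s t hst => ?_
      have h0 := congrFun hst 0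
      have h1 := congrFun hst 1
      simp at h0 h1
      subst h0
      simp at h1
      exact ⟨rfl, h1⟩
    · intro x y
      have hC : star (x • ![1, -(b * starRingEnd ℂ w), 0] + y • ![0, 1, -(b * starRingEnd ℂ w)])
          ⬝ᵥ (X * Xᴴ) *ᵥ (x • ![1, -(b * starRingEnd ℂ w), 0] + y • ![0, 1, -(b * starRingEnd ℂ w)])
          = ((((lam + ‖b‖ ^ 2 * (1 - lam)) ^ 2 + ‖b‖ ^ 2 + (‖b‖ ^ 2 * (1 - ‖b‖ ^ 2) ^ 2 * (1 - lam) ^ 2))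
              * ‖x‖ ^ 2 + (1 + ‖b‖ ^ 2) * ‖y‖ ^ 2 : ℝ) : ℂ)
            - (((starRingEnd ℂ) x * (starRingEnd ℂ) b * w * y) + starRingEnd ℂ ((starRingEnd ℂ) x * (starRingEnd ℂ) b * w * y)) := by
        rw [quadCT']
        subst hX he hf
        simp [Matrix.mulVec, dotProduct, Fin.sum_univ_three, Pi.add_apply, Pi.smul_apply,
          smul_eq_mul, Pi.star_apply, Matrix.of_apply, Matrix.cons_val_succ, Matrix.cons_val_zero,
          Matrix.cons_val_one, Matrix.head_cons, Matrix.conjTranspose_apply, RCLike.star_def,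
          _root_.map_mul, map_add, map_neg, _root_.map_one, _root_.map_zero, Complex.conj_conj,
          Complex.conj_ofReal, Matrix.vecHead, Matrix.vecTail, Function.comp, hcw]
        push_cast
        rw [abssq b, abssq x, abssq y]
        field_simp
        ring
      rw [hC, Complex.sub_re, Complex.add_re, Complex.conj_re, Complex.ofReal_re]
      ring
    · intro x y
      rw [sumAbsSq]
      have hC : star (x • ![1, -(b * starRingEnd ℂ w), 0] + y • ![0, 1, -(b * starRingEnd ℂ w)])
          ⬝ᵥ (x • ![1, -(b * starRingEnd ℂ w), 0] + y • ![0, 1, -(b * starRingEnd ℂ w)])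
          = (((1 + ‖b‖ ^ 2) * (‖x‖ ^ 2 + ‖y‖ ^ 2) : ℝ) : ℂ)
            - (((starRingEnd ℂ) x * (starRingEnd ℂ) b * w * y) + starRingEnd ℂ ((starRingEnd ℂ) x * (starRingEnd ℂ) b * w * y)) := by
        simp [dotProduct, Fin.sum_univ_three, Pi.add_apply, Pi.smul_apply,
          smul_eq_mul, Pi.star_apply, RCLike.star_def, _root_.map_mul, map_add, map_neg,
          _root_.map_one, _root_.map_zero, Complex.conj_conj, Complex.conj_ofReal, hcw]
        push_cast
        rw [abssq b, abssq x, abssq y]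
        field_simp
        ring
      rw [hC, Complex.sub_re, Complex.add_re, Complex.conj_re, Complex.ofReal_re]
      ring
  · -- P = Yᴴ * Y
    refine core (Yᴴ * Y) (b ≠ 0) ((starRingEnd ℂ) b) ((starRingEnd ℂ) w) lam (‖b‖ ^ 2)
      (‖b‖ ^ 2 * (1 - ‖b‖ ^ 2) ^ 2 * (1 - lam) ^ 2) hlam0 hlam1 ?_ (hrb') (habsw') hbne
      ![0, -(starRingEnd ℂ b * w), 1] ![-(starRingEnd ℂ b * w), 1, 0] ?_ ?_ ?_
    · positivity
    · refine LinearIndependent.pair_iff.mpr fun s t hst => ?_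
      have h1 := congrFun hst 1
      have h2 := congrFun hst 2
      simp at h1 h2
      subst h2
      simp at h1
      exact ⟨rfl, h1⟩
    · intro x y
      have hC : star (x • ![0, -(starRingEnd ℂ b * w), 1] + y • ![-(starRingEnd ℂ b * w), 1, 0])
          ⬝ᵥ (Yᴴ * Y) *ᵥ (x • ![0, -(starRingEnd ℂ b * w), 1] + y • ![-(starRingEnd ℂ b * w), 1, 0])
          = ((((lam + ‖b‖ ^ 2 * (1 - lam)) ^ 2 + ‖b‖ ^ 2 + (‖b‖ ^ 2 * (1 - ‖b‖ ^ 2) ^ 2 * (1 - lam) ^ 2))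
              * ‖x‖ ^ 2 + (1 + ‖b‖ ^ 2) * ‖y‖ ^ 2 : ℝ) : ℂ)
            - (((starRingEnd ℂ) x * (starRingEnd ℂ) ((starRingEnd ℂ) b) * (starRingEnd ℂ) w * y) + starRingEnd ℂ ((starRingEnd ℂ) x * (starRingEnd ℂ) ((starRingEnd ℂ) b) * (starRingEnd ℂ) w * y)) := by
        rw [quadCT]
        subst hY he hf
        simp [Matrix.mulVec, dotProduct, Fin.sum_univ_three, Pi.add_apply, Pi.smul_apply,
          smul_eq_mul, Pi.star_apply, Matrix.of_apply, Matrix.cons_val_succ, Matrix.cons_val_zero,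
          Matrix.cons_val_one, Matrix.head_cons, Matrix.conjTranspose_apply, RCLike.star_def,
          _root_.map_mul, map_add, map_neg, _root_.map_one, _root_.map_zero, Complex.conj_conj,
          Complex.conj_ofReal, Matrix.vecHead, Matrix.vecTail, Function.comp, hcw]
        push_cast
        rw [abssq b, abssq x, abssq y]
        field_simp
        ring
      rw [hC, Complex.sub_re, Complex.add_re, Complex.conj_re, Complex.ofReal_re]
      ring
    · intro x y
      rw [sumAbsSq]
      have hC : star (x • ![0, -(starRingEnd ℂ b * w), 1] + y • ![-(starRingEnd ℂ b * w), 1, 0])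
          ⬝ᵥ (x • ![0, -(starRingEnd ℂ b * w), 1] + y • ![-(starRingEnd ℂ b * w), 1, 0])
          = (((1 + ‖b‖ ^ 2) * (‖x‖ ^ 2 + ‖y‖ ^ 2) : ℝ) : ℂ)
            - (((starRingEnd ℂ) x * (starRingEnd ℂ) ((starRingEnd ℂ) b) * (starRingEnd ℂ) w * y) + starRingEnd ℂ ((starRingEnd ℂ) x * (starRingEnd ℂ) ((starRingEnd ℂ) b) * (starRingEnd ℂ) w * y)) := by
        simp [dotProduct, Fin.sum_univ_three, Pi.add_apply, Pi.smul_apply,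
          smul_eq_mul, Pi.star_apply, RCLike.star_def, _root_.map_mul, map_add, map_neg,
          _root_.map_one, _root_.map_zero, Complex.conj_conj, Complex.conj_ofReal, hcw]
        push_cast
        rw [abssq b, abssq x, abssq y]
        field_simp
        ring
      rw [hC, Complex.sub_re, Complex.add_re, Complex.conj_re, Complex.ofReal_re]
      ring
  · -- P = Y * Yᴴ
    refine core (Y * Yᴴ) (b ≠ 0) ((starRingEnd ℂ) b) ((starRingEnd ℂ) w) lam (‖b‖ ^ 2)
      ((0:ℝ)) hlam0 hlam1 ?_ (hrb') (habsw') hbne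
      ![0, 1, -(b * starRingEnd ℂ w)] ![1, -(b * starRingEnd ℂ w), 0] ?_ ?_ ?_
    · positivity
    · refine LinearIndependent.pair_iff.mpr fun s t hst => ?_
      have h0 := congrFun hst 0
      have h1 := congrFun hst 1
      simp at h0 h1
      subst h0
      simp at h1
      exact ⟨h1, rfl⟩
    · intro x y
      have hC : star (x • ![0, 1, -(b * starRingEnd ℂ w)] + y • ![1, -(b * starRingEnd ℂ w), 0])
          ⬝ᵥ (Y * Yᴴ) *ᵥ (x • ![0, 1, -(b * starRingEnd ℂ w)] + y • ![1, -(b * starRingEnd ℂ w), 0])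
          = ((((lam + ‖b‖ ^ 2 * (1 - lam)) ^ 2 + ‖b‖ ^ 2 + ((0:ℝ)))
              * ‖x‖ ^ 2 + (1 + ‖b‖ ^ 2) * ‖y‖ ^ 2 : ℝ) : ℂ)
            - (((starRingEnd ℂ) x * (starRingEnd ℂ) ((starRingEnd ℂ) b) * (starRingEnd ℂ) w * y) + starRingEnd ℂ ((starRingEnd ℂ) x * (starRingEnd ℂ) ((starRingEnd ℂ) b) * (starRingEnd ℂ) w * y)) := by
        rw [quadCT']
        subst hY he hf
        simp [Matrix.mulVec, dotProduct, Fin.sum_univ_three, Pi.add_apply, Pi.smul_apply,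
          smul_eq_mul, Pi.star_apply, Matrix.of_apply, Matrix.cons_val_succ, Matrix.cons_val_zero,
          Matrix.cons_val_one, Matrix.head_cons, Matrix.conjTranspose_apply, RCLike.star_def,
          _root_.map_mul, map_add, map_neg, _root_.map_one, _root_.map_zero, Complex.conj_conj,
          Complex.conj_ofReal, Matrix.vecHead, Matrix.vecTail, Function.comp, hcw]
        push_cast
        rw [abssq b, abssq x, abssq y]
        field_simp
        ring
      rw [hC, Complex.sub_re, Complex.add_re, Complex.conj_re, Complex.ofReal_re]
      ring
    · intro x y
      rw [sumAbsSq]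
      have hC : star (x • ![0, 1, -(b * starRingEnd ℂ w)] + y • ![1, -(b * starRingEnd ℂ w), 0])
          ⬝ᵥ (x • ![0, 1, -(b * starRingEnd ℂ w)] + y • ![1, -(b * starRingEnd ℂ w), 0])
          = (((1 + ‖b‖ ^ 2) * (‖x‖ ^ 2 + ‖y‖ ^ 2) : ℝ) : ℂ)
            - (((starRingEnd ℂ) x * (starRingEnd ℂ) ((starRingEnd ℂ) b) * (starRingEnd ℂ) w * y) + starRingEnd ℂ ((starRingEnd ℂ) x * (starRingEnd ℂ) ((starRingEnd ℂ) b) * (starRingEnd ℂ) w * y)) := by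
        simp [dotProduct, Fin.sum_univ_three, Pi.add_apply, Pi.smul_apply,
          smul_eq_mul, Pi.star_apply, RCLike.star_def, _root_.map_mul, map_add, map_neg,
          _root_.map_one, _root_.map_zero, Complex.conj_conj, Complex.conj_ofReal, hcw]
        push_cast
        rw [abssq b, abssq x, abssq y]
        field_simp
        ring
      rw [hC, Complex.sub_re, Complex.add_re, Complex.conj_re, Complex.ofReal_re]
      ring
end
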